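/- arXiv:1909.00047 — 6 statements merged into one kernel-verified Lean document; each statement's English description precedes it below -/
import Mathlib

section
/- Let N ≥ 2 workers run GADMM with penalty ρ > 0, generating primal iterates θ_n^k and dual iterates λ_n^k. Let θ* be an optimal consensus point, i.e. θ* minimizes θ ↦ Σ_{n=1}^N f_n(θ) over E. Then for every iteration index k, the optimality gap is upper bounded by Σ_{n=1}^N (f_n(θ_n^{k+1}) − f_n(θ*)) ≤ −Σ_{n=1}^{N−1} ⟨λ_n^{k+1}, r_{n,n+1}^{k+1}⟩ + Σ_{n odd} ⟨s_n^{k+1}, θ* − θ_n^{k+1}⟩, where r_{n,n+1}^{k+1} = θ_n^{k+1} − θ_{n+1}^{k+1} is the primal residual and s_n^{k+1} is the dual residual of head worker n. -/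
open Finset Filter
open scoped RealInnerProductSpace Topology

/-!
Every GADMM update minimizes `f_n` plus smooth coupling terms, so by convexity minus the gradient
of those terms at `θ_n^{k+1}` is a subgradient of `f_n` there; tested against `θ*` this bounds
`f_n(θ_n^{k+1}) - f_n(θ*)` by `⟪g_n, θ* - θ_n^{k+1}⟫`. Through the dual update, `g_n` becomes
`λ_n^{k+1} - λ_{n-1}^{k+1}`, plus the dual residual `s_n^{k+1}` for a head, whose neighbours were
still at iteration `k` when it moved. Summing over `n`, an Abel summation turns the `λ`-differences
into the primal residual terms.
-/

theorem ConvexOn.sub_le_of_isMinOn_add {E : Type*} [NormedAddCommGroup E] [NormedSpace ℝ E]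
    {f h : E → ℝ} {h' : E →L[ℝ] ℝ} {x₀ : E} (hf : ConvexOn ℝ Set.univ f)
    (hmin : IsMinOn (fun y => f y + h y) Set.univ x₀) (hh : HasFDerivAt h h' x₀) (x : E) :
    f x₀ - f x ≤ h' (x - x₀) := by
  refine ge_of_tendsto (hh.hasLineDerivAt (x - x₀)).tendsto_slope_zero_right ?_
  filter_upwards [Ioc_mem_nhdsGT zero_lt_one] with t ⟨ht0, ht1⟩
  have hconv : f (x₀ + t • (x - x₀)) ≤ (1 - t) * f x₀ + t * f x := by
    rw [show x₀ + t • (x - x₀) = (1 - t) • x₀ + t • x by module]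
    exact hf.2 (Set.mem_univ x₀) (Set.mem_univ x) (sub_nonneg.2 ht1) ht0.le (by ring)
  have hle := isMinOn_univ_iff.1 hmin (x₀ + t • (x - x₀))
  rw [smul_eq_mul, le_inv_mul_iff₀ ht0]
  linarith

section InnerProductSpace

variable {E : Type*} [NormedAddCommGroup E] [InnerProductSpace ℝ E]

theorem hasFDerivAt_inner_sub_add_norm_sub_sq (c v x₀ : E) (ρ : ℝ) :
    HasFDerivAt (fun x => ⟪c, x - v⟫ + ρ / 2 * ‖x - v‖ ^ 2)
      (innerSL ℝ (c + ρ • (x₀ - v))) x₀ := by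
  have hsub := hasFDerivAt_sub_const (𝕜 := ℝ) (x := x₀) v
  refine (((hasFDerivAt_const c x₀).inner ℝ hsub).fun_add
    ((hsub.norm_sq).const_mul (ρ / 2))).congr_fderiv ?_
  ext d
  simp only [add_apply, ContinuousLinearMap.comp_apply, ContinuousLinearMap.prod_apply, zero_apply,
    ContinuousLinearMap.id_apply, fderivInnerCLM_apply, inner_zero_left, add_zero, smul_apply,
    coe_innerSL_apply, nsmul_eq_mul, smul_eq_mul, inner_add_left, real_inner_smul_left]
  ring

theorem hasFDerivAt_inner_const_sub_add_norm_const_sub_sq (a u x₀ : E) (ρ : ℝ) :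
    HasFDerivAt (fun x => ⟪a, u - x⟫ + ρ / 2 * ‖u - x‖ ^ 2)
      (innerSL ℝ (ρ • (x₀ - u) - a)) x₀ := by
  convert hasFDerivAt_inner_sub_add_norm_sub_sq (-a) u x₀ ρ using 2 with x
  · rw [inner_neg_left, ← inner_neg_right, neg_sub, norm_sub_rev]
  · rw [neg_add_eq_sub]

variable {f : E → ℝ} {ρ : ℝ} {a b u v θ : E}

theorem ConvexOn.sub_le_inner_of_minimizes_coupled_right (hf : ConvexOn ℝ Set.univ f)
    (hmin : ∀ x, f θ + ⟪b, θ - v⟫ + ρ / 2 * ‖θ - v‖ ^ 2 ≤ f x + ⟪b, x - v⟫ + ρ / 2 * ‖x - v‖ ^ 2)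
    (y : E) : f θ - f y ≤ ⟪b + ρ • (θ - v), y - θ⟫ :=
  hf.sub_le_of_isMinOn_add (isMinOn_univ_iff.2 fun x => by simpa only [add_assoc] using hmin x)
    (hasFDerivAt_inner_sub_add_norm_sub_sq b v θ ρ) y

theorem ConvexOn.sub_le_inner_of_minimizes_coupled_left (hf : ConvexOn ℝ Set.univ f)
    (hmin : ∀ x, f θ + ⟪a, u - θ⟫ + ρ / 2 * ‖u - θ‖ ^ 2 ≤ f x + ⟪a, u - x⟫ + ρ / 2 * ‖u - x‖ ^ 2)
    (y : E) : f θ - f y ≤ ⟪ρ • (θ - u) - a, y - θ⟫ :=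
  hf.sub_le_of_isMinOn_add (isMinOn_univ_iff.2 fun x => by simpa only [add_assoc] using hmin x)
    (hasFDerivAt_inner_const_sub_add_norm_const_sub_sq a u θ ρ) y

theorem ConvexOn.sub_le_inner_of_minimizes_coupled_both (hf : ConvexOn ℝ Set.univ f)
    (hmin : ∀ x, f θ + ⟪a, u - θ⟫ + ⟪b, θ - v⟫ + ρ / 2 * ‖u - θ‖ ^ 2 + ρ / 2 * ‖θ - v‖ ^ 2
      ≤ f x + ⟪a, u - x⟫ + ⟪b, x - v⟫ + ρ / 2 * ‖u - x‖ ^ 2 + ρ / 2 * ‖x - v‖ ^ 2)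
    (y : E) : f θ - f y ≤ ⟪b - a + ρ • (θ - u) + ρ • (θ - v), y - θ⟫ := by
  have hh := (hasFDerivAt_inner_const_sub_add_norm_const_sub_sq a u θ ρ).fun_add
    (hasFDerivAt_inner_sub_add_norm_sub_sq b v θ ρ)
  rw [← map_add] at hh
  convert hf.sub_le_of_isMinOn_add (isMinOn_univ_iff.2 fun x => by linarith [hmin x]) hh y using 1
  rw [coe_innerSL_apply]
  congr 1
  abel

theorem sum_Icc_inner_sub_pred {N : ℕ} (hN : 1 ≤ N) (Λ y : ℕ → E) :
    ∑ n ∈ Icc 1 N, ⟪Λ n - Λ (n - 1), y n⟫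
      = ⟪Λ N, y N⟫ - ⟪Λ 0, y 1⟫ + ∑ n ∈ Icc 1 (N - 1), ⟪Λ n, y n - y (n + 1)⟫ := by
  obtain ⟨M, rfl⟩ := Nat.exists_eq_add_of_le' hN
  induction M with
  | zero => simp [inner_sub_left]
  | succ M ih =>
    rw [sum_Icc_succ_top (by omega), ih (by omega), Nat.add_sub_cancel,
      Nat.add_sub_cancel, sum_Icc_succ_top (by omega)]
    simp only [inner_sub_left, inner_sub_right]
    ring

end InnerProductSpace

theorem gadmm_optimality_gap_upper_bound_general
    {E : Type*} [NormedAddCommGroup E] [InnerProductSpace ℝ E]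
    (N : ℕ) (hN : 2 ≤ N) (hNeven : Even N)
    (f : ℕ → E → ℝ) (hconv : ∀ n, ConvexOn ℝ Set.univ (f n))
    (ρ : ℝ)
    (θ lam : ℕ → ℕ → E)
    -- (a) head updates: interior odd workers 1 < n ≤ N
    (hHead : ∀ k n, Odd n → 1 < n → n ≤ N → ∀ x : E,
      f n (θ (k+1) n) + ⟪lam k (n-1), θ k (n-1) - θ (k+1) n⟫
        + ⟪lam k n, θ (k+1) n - θ k (n+1)⟫
        + ρ/2 * ‖θ k (n-1) - θ (k+1) n‖^2 + ρ/2 * ‖θ (k+1) n - θ k (n+1)‖^2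
      ≤ f n x + ⟪lam k (n-1), θ k (n-1) - x⟫ + ⟪lam k n, x - θ k (n+1)⟫
        + ρ/2 * ‖θ k (n-1) - x‖^2 + ρ/2 * ‖x - θ k (n+1)‖^2)
    -- (a) head update for the first worker n = 1
    (hHead1 : ∀ k, ∀ x : E,
      f 1 (θ (k+1) 1) + ⟪lam k 1, θ (k+1) 1 - θ k 2⟫ + ρ/2 * ‖θ (k+1) 1 - θ k 2‖^2
      ≤ f 1 x + ⟪lam k 1, x - θ k 2⟫ + ρ/2 * ‖x - θ k 2‖^2)
    -- (b) tail updates: even workers 0 < n < N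
    (hTail : ∀ k n, Even n → 0 < n → n < N → ∀ x : E,
      f n (θ (k+1) n) + ⟪lam k (n-1), θ (k+1) (n-1) - θ (k+1) n⟫
        + ⟪lam k n, θ (k+1) n - θ (k+1) (n+1)⟫
        + ρ/2 * ‖θ (k+1) (n-1) - θ (k+1) n‖^2 + ρ/2 * ‖θ (k+1) n - θ (k+1) (n+1)‖^2
      ≤ f n x + ⟪lam k (n-1), θ (k+1) (n-1) - x⟫ + ⟪lam k n, x - θ (k+1) (n+1)⟫
        + ρ/2 * ‖θ (k+1) (n-1) - x‖^2 + ρ/2 * ‖x - θ (k+1) (n+1)‖^2)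
    -- (b) tail update for the last worker n = N
    (hTailN : ∀ k, ∀ x : E,
      f N (θ (k+1) N) + ⟪lam k (N-1), θ (k+1) (N-1) - θ (k+1) N⟫
        + ρ/2 * ‖θ (k+1) (N-1) - θ (k+1) N‖^2
      ≤ f N x + ⟪lam k (N-1), θ (k+1) (N-1) - x⟫ + ρ/2 * ‖θ (k+1) (N-1) - x‖^2)
    -- (c) dual updates
    (hDual : ∀ k n, 1 ≤ n → n ≤ N - 1 →
      lam (k+1) n = lam k n + ρ • (θ (k+1) n - θ (k+1) (n+1)))
    (θstar : E) :
    ∀ k : ℕ,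
      ∑ n ∈ Icc 1 N, (f n (θ (k+1) n) - f n θstar)
        ≤ -∑ n ∈ Icc 1 (N-1), ⟪lam (k+1) n, θ (k+1) n - θ (k+1) (n+1)⟫
          + ∑ n ∈ (Icc 1 N).filter (fun n => Odd n),
              ⟪(if n = 1 then ρ • (θ (k+1) 2 - θ k 2)
                else ρ • (θ (k+1) (n-1) - θ k (n-1)) + ρ • (θ (k+1) (n+1) - θ k (n+1))),
                θstar - θ (k+1) n⟫ := by
  intro k
  set S : ℕ → E := fun n => if n = 1 then ρ • (θ (k+1) 2 - θ k 2)
    else ρ • (θ (k+1) (n-1) - θ k (n-1)) + ρ • (θ (k+1) (n+1) - θ k (n+1))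
  -- extending `λ^{k+1}` by zero lets the boundary workers share the interior formula
  set Λ : ℕ → E := fun n => if n ∈ Ico 1 N then lam (k+1) n else 0
  have hΛ_zero : Λ 0 = 0 := if_neg (by simp)
  have hΛ_N : Λ N = 0 := if_neg (by simp)
  have hΛ_eq : ∀ n, 1 ≤ n → n < N → Λ n = lam (k+1) n :=
    fun n h1 h2 => if_pos (mem_Ico.2 ⟨h1, h2⟩)
  have hΛ_dual : ∀ n, 1 ≤ n → n < N → Λ n = lam k n + ρ • (θ (k+1) n - θ (k+1) (n+1)) :=
    fun n h1 h2 => (hΛ_eq n h1 h2).trans (hDual k n h1 (by omega))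
  have worker_bound : ∀ n ∈ Icc 1 N, f n (θ (k+1) n) - f n θstar
      ≤ ⟪Λ n - Λ (n-1), θstar - θ (k+1) n⟫ + if Odd n then ⟪S n, θstar - θ (k+1) n⟫ else 0 := by
    intro n hn
    obtain ⟨hn1, hnN⟩ := mem_Icc.1 hn
    rcases Nat.even_or_odd n with he | ho
    · have hn2 : 2 ≤ n := by obtain ⟨m, rfl⟩ := he; omega
      rw [if_neg (Nat.not_odd_iff_even.2 he), add_zero]
      rcases hnN.lt_or_eq with hlt | rfl
      · convert (hconv n).sub_le_inner_of_minimizes_coupled_both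
          (hTail k n he (by omega) hlt) θstar using 2
        rw [hΛ_dual n (by omega) hlt, hΛ_dual (n-1) (by omega) (by omega),
          Nat.sub_add_cancel (by omega)]
        module
      · convert (hconv n).sub_le_inner_of_minimizes_coupled_left (hTailN k) θstar using 2
        rw [hΛ_N, hΛ_dual (n-1) (by omega) (by omega), Nat.sub_add_cancel (by omega)]
        module
    · rw [if_pos ho, ← inner_add_left]
      rcases hn1.lt_or_eq with hlt | rfl
      · have hnN' : n < N := by
          obtain ⟨m, rfl⟩ := ho; obtain ⟨l, rfl⟩ := hNeven; omega
        convert (hconv n).sub_le_inner_of_minimizes_coupled_both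
          (hHead k n ho hlt hnN) θstar using 2
        rw [hΛ_dual n (by omega) hnN', hΛ_dual (n-1) (by omega) (by omega),
          Nat.sub_add_cancel (by omega), show S n = _ from if_neg hlt.ne']
        module
      · convert (hconv 1).sub_le_inner_of_minimizes_coupled_right (hHead1 k) θstar using 2
        rw [hΛ_zero, hΛ_dual 1 le_rfl (by omega), show S 1 = _ from if_pos rfl]
        module
  calc ∑ n ∈ Icc 1 N, (f n (θ (k+1) n) - f n θstar)
      ≤ ∑ n ∈ Icc 1 N, (⟪Λ n - Λ (n-1), θstar - θ (k+1) n⟫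
          + if Odd n then ⟪S n, θstar - θ (k+1) n⟫ else 0) := sum_le_sum worker_bound
    _ = _ := by
      rw [sum_add_distrib, sum_Icc_inner_sub_pred (by omega), hΛ_zero, hΛ_N, ← sum_filter,
        ← sum_neg_distrib]
      simp only [inner_zero_left, sub_zero, zero_add]
      congr 1
      refine sum_congr rfl fun n hn => ?_
      obtain ⟨hn1, hnN⟩ := mem_Icc.1 hn
      rw [hΛ_eq n hn1 (by omega), ← inner_neg_right, neg_sub, sub_sub_sub_cancel_left]

theorem gadmm_optimality_gap_upper_bound
    {E : Type*} [NormedAddCommGroup E] [InnerProductSpace ℝ E] [FiniteDimensional ℝ E]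
    (N : ℕ) (hN : 2 ≤ N) (hNeven : Even N)
    (f : ℕ → E → ℝ) (hconv : ∀ n, ConvexOn ℝ Set.univ (f n))
    (ρ : ℝ) (hρ : 0 < ρ)
    (θ lam : ℕ → ℕ → E)
    -- (a) head updates: interior odd workers 1 < n ≤ N
    (hHead : ∀ k n, Odd n → 1 < n → n ≤ N → ∀ x : E,
      f n (θ (k+1) n) + ⟪lam k (n-1), θ k (n-1) - θ (k+1) n⟫
        + ⟪lam k n, θ (k+1) n - θ k (n+1)⟫
        + ρ/2 * ‖θ k (n-1) - θ (k+1) n‖^2 + ρ/2 * ‖θ (k+1) n - θ k (n+1)‖^2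
      ≤ f n x + ⟪lam k (n-1), θ k (n-1) - x⟫ + ⟪lam k n, x - θ k (n+1)⟫
        + ρ/2 * ‖θ k (n-1) - x‖^2 + ρ/2 * ‖x - θ k (n+1)‖^2)
    -- (a) head update for the first worker n = 1
    (hHead1 : ∀ k, ∀ x : E,
      f 1 (θ (k+1) 1) + ⟪lam k 1, θ (k+1) 1 - θ k 2⟫ + ρ/2 * ‖θ (k+1) 1 - θ k 2‖^2
      ≤ f 1 x + ⟪lam k 1, x - θ k 2⟫ + ρ/2 * ‖x - θ k 2‖^2)
    -- (b) tail updates: even workers 0 < n < N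
    (hTail : ∀ k n, Even n → 0 < n → n < N → ∀ x : E,
      f n (θ (k+1) n) + ⟪lam k (n-1), θ (k+1) (n-1) - θ (k+1) n⟫
        + ⟪lam k n, θ (k+1) n - θ (k+1) (n+1)⟫
        + ρ/2 * ‖θ (k+1) (n-1) - θ (k+1) n‖^2 + ρ/2 * ‖θ (k+1) n - θ (k+1) (n+1)‖^2
      ≤ f n x + ⟪lam k (n-1), θ (k+1) (n-1) - x⟫ + ⟪lam k n, x - θ (k+1) (n+1)⟫
        + ρ/2 * ‖θ (k+1) (n-1) - x‖^2 + ρ/2 * ‖x - θ (k+1) (n+1)‖^2)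
    -- (b) tail update for the last worker n = N
    (hTailN : ∀ k, ∀ x : E,
      f N (θ (k+1) N) + ⟪lam k (N-1), θ (k+1) (N-1) - θ (k+1) N⟫
        + ρ/2 * ‖θ (k+1) (N-1) - θ (k+1) N‖^2
      ≤ f N x + ⟪lam k (N-1), θ (k+1) (N-1) - x⟫ + ρ/2 * ‖θ (k+1) (N-1) - x‖^2)
    -- (c) dual updates
    (hDual : ∀ k n, 1 ≤ n → n ≤ N - 1 →
      lam (k+1) n = lam k n + ρ • (θ (k+1) n - θ (k+1) (n+1)))
    -- θ* is an optimal consensus point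
    (θstar : E) (hopt : ∀ x : E, ∑ n ∈ Icc 1 N, f n θstar ≤ ∑ n ∈ Icc 1 N, f n x) :
    ∀ k : ℕ,
      ∑ n ∈ Icc 1 N, (f n (θ (k+1) n) - f n θstar)
        ≤ -∑ n ∈ Icc 1 (N-1), ⟪lam (k+1) n, θ (k+1) n - θ (k+1) (n+1)⟫
          + ∑ n ∈ (Icc 1 N).filter (fun n => Odd n),
              ⟪(if n = 1 then ρ • (θ (k+1) 2 - θ k 2)
                else ρ • (θ (k+1) (n-1) - θ k (n-1)) + ρ • (θ (k+1) (n+1) - θ k (n+1))),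
                θstar - θ (k+1) n⟫ :=
  gadmm_optimality_gap_upper_bound_general N hN hNeven f hconv ρ θ lam hHead hHead1 hTail hTailN
    hDual θstar
end

section
/- Let N ≥ 2 workers run GADMM with penalty ρ > 0, generating primal iterates θ_n^k and dual iterates λ_n^k, and suppose the unaugmented Lagrangian L_0({θ_n},{λ_n}) = Σ_{n=1}^N f_n(θ_n) + Σ_{n=1}^{N−1} ⟨λ_n, θ_n − θ_{n+1}⟩ has a saddle point ((θ*,…,θ*), (λ_1*,…,λ_{N−1}*)). Then for every n ∈ {1,…,N−1} the primal residual converges to zero: lim_{k→∞} r_{n,n+1}^k = lim_{k→∞} (θ_n^k − θ_{n+1}^k) = 0. -/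
open Finset Filter
open scoped RealInnerProductSpace Topology

/-!
GADMM is two-block ADMM in disguise: the heads form the first block and the tails the second.
Each worker's update is a proximal step, so by convexity the new iterate has an explicit
subgradient, built from the duals and the neighbours' values it used. Pairing these with the
saddle point and regrouping the sum by edges gives, exactly as for ADMM, the descent
`V (k+2) + ρ/2 ∑ₑ ‖r (k+2) e‖² ≤ V (k+1)` of
`V k = ∑ₑ (‖λ k e - λ* e‖² / (2ρ) + ρ/2 ‖θ k (tail e) - θ*‖²)`. The cross terms left over are
nonpositive by monotonicity of the tails' subgradients between consecutive rounds. Hence the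
squared residuals are summable, so they tend to zero.
-/

/-- The unaugmented Lagrangian `L_0({θ_n}, {λ_n})`. -/
noncomputable def L0 {E : Type*} [NormedAddCommGroup E] [InnerProductSpace ℝ E]
    (N : ℕ) (f : ℕ → E → ℝ) (th la : ℕ → E) : ℝ :=
  ∑ n ∈ Finset.Icc 1 N, f n (th n)
    + ∑ n ∈ Finset.Icc 1 (N-1), ⟪la n, th n - th (n+1)⟫

theorem sum_Icc_ite_add_ite {M : Type*} [AddCommMonoid M] (N : ℕ) (a b : ℕ → M) :
    ∑ n ∈ Icc 1 N, ((if 2 ≤ n then a (n - 1) else 0) + (if n ≤ N - 1 then b n else 0)) =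
      ∑ e ∈ Icc 1 (N - 1), (a e + b e) := by
  have hleft : (Icc 1 N).filter (2 ≤ ·) = (Icc 1 (N - 1)).image (· + 1) := by
    ext n
    simp only [mem_filter, mem_Icc, mem_image]
    constructor
    · intro h; exact ⟨n - 1, by omega, by omega⟩
    · rintro ⟨e, he, rfl⟩; omega
  have hright : (Icc 1 N).filter (· ≤ N - 1) = Icc 1 (N - 1) := by
    ext
    simp only [mem_filter, mem_Icc]
    omega
  rw [sum_add_distrib, sum_add_distrib, ← sum_filter, ← sum_filter, hleft, hright,
    sum_image (by simp)]
  simp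

theorem tendsto_zero_of_add_mul_le {Φ R : ℕ → ℝ} {c : ℝ} (hc : 0 < c) (hΦ : ∀ k, 0 ≤ Φ k)
    (hR : ∀ k, 0 ≤ R k) (hdesc : ∀ k, Φ (k + 1) + c * R (k + 1) ≤ Φ k) :
    Tendsto R atTop (𝓝 0) := by
  have hpartial : ∀ K, ∑ k ∈ range K, c * R (k + 1) ≤ Φ 0 - Φ K := by
    intro K
    induction K with
    | zero => simp
    | succ K ih => rw [sum_range_succ]; linarith [hdesc K]
  have hsum : Summable fun k => c * R (k + 1) :=
    summable_of_sum_range_le (fun k => mul_nonneg hc.le (hR _))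
      (fun K => (hpartial K).trans (sub_le_self _ (hΦ K)))
  rw [← tendsto_add_atTop_iff_nat 1]
  simpa [hc.ne'] using hsum.tendsto_atTop_zero.const_mul c⁻¹

theorem tendsto_zero_of_tendsto_sum_norm_sq {E ι : Type*} [NormedAddCommGroup E] {s : Finset ι}
    {v : ℕ → ι → E} (h : Tendsto (fun k => ∑ i ∈ s, ‖v k i‖ ^ 2) atTop (𝓝 0)) {i : ι} (hi : i ∈ s) :
    Tendsto (fun k => v k i) atTop (𝓝 0) := by
  have hsq : Tendsto (fun k => ‖v k i‖ ^ 2) atTop (𝓝 0) :=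
    squeeze_zero (fun _ => by positivity)
      (fun k => single_le_sum (f := fun i => ‖v k i‖ ^ 2) (fun _ _ => by positivity) hi) h
  rw [tendsto_zero_iff_norm_tendsto_zero]
  simpa using hsq.sqrt

section InnerProduct

variable {E : Type*} [NormedAddCommGroup E] [InnerProductSpace ℝ E]

def HasSubgradientAt (f : E → ℝ) (g a : E) : Prop :=
  ∀ x, f a + ⟪g, x - a⟫ ≤ f x

theorem HasSubgradientAt.inner_sub_nonneg {f : E → ℝ} {g h a b : E}
    (ha : HasSubgradientAt f g a) (hb : HasSubgradientAt f h b) : 0 ≤ ⟪g - h, a - b⟫ := by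
  have h₁ := ha b
  have h₂ := hb a
  rw [← neg_sub a b, inner_neg_right] at h₁
  rw [inner_sub_left]
  linarith

theorem ConvexOn.hasSubgradientAt_of_isMin_add {f g : E → ℝ} {a G : E}
    (hf : ConvexOn ℝ Set.univ f) (hmin : ∀ y, f a + g a ≤ f y + g y)
    (hg : ∀ u, HasDerivAt (fun t : ℝ => g (a + t • u)) (-⟪G, u⟫) 0) :
    HasSubgradientAt f G a := by
  intro x
  -- convexity and minimality give `t (f a - f x) ≤ g (a + t (x - a)) - g a`; let `t → 0⁺`
  have hslope : ∀ t ∈ Set.Ioc (0 : ℝ) 1,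
      f a - f x ≤ t⁻¹ • (g (a + (0 + t) • (x - a)) - g (a + (0 : ℝ) • (x - a))) := by
    rintro t ⟨ht₀, ht₁⟩
    have hconv := hf.2 (Set.mem_univ a) (Set.mem_univ x) (sub_nonneg.2 ht₁) ht₀.le
      (sub_add_cancel 1 t)
    rw [show (1 - t) • a + t • x = a + t • (x - a) by module, smul_eq_mul, smul_eq_mul] at hconv
    have hm := hmin (a + t • (x - a))
    rw [zero_add, zero_smul, add_zero, smul_eq_mul, le_inv_mul_iff₀ ht₀]
    nlinarith
  have hlim := (hg (x - a)).tendsto_slope_zero_right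
  have := ge_of_tendsto hlim (eventually_of_mem (Ioc_mem_nhdsGT one_pos) hslope)
  linarith

noncomputable def augmentedTerm (ρ : ℝ) (μ c x : E) : ℝ := ⟪μ, c - x⟫ + ρ / 2 * ‖c - x‖ ^ 2

theorem augmentedTerm_neg (ρ : ℝ) (μ c x : E) :
    augmentedTerm ρ (-μ) c x = ⟪μ, x - c⟫ + ρ / 2 * ‖x - c‖ ^ 2 := by
  rw [augmentedTerm, inner_neg_left, ← inner_neg_right, neg_sub, norm_sub_rev]

theorem hasDerivAt_augmentedTerm (ρ : ℝ) (μ c a u : E) :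
    HasDerivAt (fun t : ℝ => augmentedTerm ρ μ c (a + t • u)) (-⟪μ + ρ • (c - a), u⟫) 0 := by
  have hline : HasDerivAt (fun t : ℝ => c - (a + t • u)) (-u) 0 := by
    simpa only [one_smul] using (((hasDerivAt_id' (0 : ℝ)).smul_const u).const_add a).const_sub c
  refine (((hasDerivAt_const (0 : ℝ) μ).inner ℝ hline).add
    (hline.norm_sq.const_mul (ρ / 2))).congr_deriv ?_
  simp only [zero_smul, add_zero, inner_add_left, inner_neg_right, real_inner_smul_left,
    inner_zero_left]
  ring

/- `μ + ρ • (u' - v')` is the updated multiplier of an edge whose endpoints moved from `u, v`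
(the values used in the primal step) to `u', v'`; the slack is `ρ/2 (‖u - u'‖² + ‖v - v'‖²)`. -/
theorem admm_edge_le {ρ : ℝ} (hρ : 0 < ρ) (μ μstar s u v u' v' : E) :
    ⟪μ + ρ • (u - v'), v' - s⟫ + ⟪-μ + ρ • (v - u'), u' - s⟫ + ⟪μstar, u' - v'⟫ ≤
      (‖μ - μstar‖ ^ 2 - ‖μ + ρ • (u' - v') - μstar‖ ^ 2) / (2 * ρ) - ρ / 2 * ‖u' - v'‖ ^ 2
        + ρ / 2 * (‖u - s‖ ^ 2 - ‖u' - s‖ ^ 2) + ρ / 2 * (‖v - s‖ ^ 2 - ‖v' - s‖ ^ 2)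
        + ρ * ⟪(v - v') - (u - u'), u' - v'⟫ := by
  have hgap : (‖μ - μstar‖ ^ 2 - ‖μ + ρ • (u' - v') - μstar‖ ^ 2) / (2 * ρ)
      - ρ / 2 * ‖u' - v'‖ ^ 2 + ρ / 2 * (‖u - s‖ ^ 2 - ‖u' - s‖ ^ 2)
      + ρ / 2 * (‖v - s‖ ^ 2 - ‖v' - s‖ ^ 2) + ρ * ⟪(v - v') - (u - u'), u' - v'⟫
      - (⟪μ + ρ • (u - v'), v' - s⟫ + ⟪-μ + ρ • (v - u'), u' - s⟫ + ⟪μstar, u' - v'⟫)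
      = ρ / 2 * (‖u - u'‖ ^ 2 + ‖v - v'‖ ^ 2) := by
    simp only [← real_inner_self_eq_norm_sq, inner_sub_left, inner_sub_right, inner_add_left,
      inner_add_right, inner_neg_left, real_inner_smul_right, real_inner_comm]
    field_simp
    ring
  have : 0 ≤ ρ / 2 * (‖u - u'‖ ^ 2 + ‖v - v'‖ ^ 2) := by positivity
  linarith

end InnerProduct

namespace GADMM

variable {E : Type*} {N : ℕ} {ρ : ℝ} {θ lam : ℕ → ℕ → E}

/-- The value of worker `m` that its neighbours use in round `k + 1`: the heads (odd `m`)
update first, so the tails see their new values. -/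
def visible (θ : ℕ → ℕ → E) (k m : ℕ) : E := if Even m then θ k m else θ (k + 1) m

theorem visible_of_even {k m : ℕ} (hm : Even m) : visible θ k m = θ k m := if_pos hm

theorem visible_of_odd {k m : ℕ} (hm : Odd m) : visible θ k m = θ (k + 1) m :=
  if_neg (Nat.not_even_iff_odd.2 hm)

section Normed

variable [NormedAddCommGroup E]

def lag (θ : ℕ → ℕ → E) (k m : ℕ) : E := visible θ k m - θ (k + 1) m

noncomputable def tailSqDist (θ : ℕ → ℕ → E) (s : E) (k m : ℕ) : ℝ :=
  if Even m then ‖θ k m - s‖ ^ 2 else 0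

noncomputable def residualSq (N : ℕ) (θ : ℕ → ℕ → E) (k : ℕ) : ℝ :=
  ∑ e ∈ Icc 1 (N - 1), ‖θ k e - θ k (e + 1)‖ ^ 2

theorem sq_norm_visible_sub (s : E) (k m : ℕ) :
    ‖visible θ k m - s‖ ^ 2 - ‖θ (k + 1) m - s‖ ^ 2 =
      tailSqDist θ s k m - tailSqDist θ s (k + 1) m := by
  unfold visible tailSqDist
  split_ifs <;> simp

theorem tailSqDist_nonneg (s : E) (k m : ℕ) : 0 ≤ tailSqDist θ s k m := by
  unfold tailSqDist
  split_ifs <;> positivity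

theorem residualSq_nonneg (k : ℕ) : 0 ≤ residualSq N θ k :=
  sum_nonneg fun _ _ => by positivity

noncomputable def edgeEnergy (ρ : ℝ) (θ lam : ℕ → ℕ → E) (lamstar : ℕ → E) (s : E) (k e : ℕ) :
    ℝ :=
  ‖lam k e - lamstar e‖ ^ 2 / (2 * ρ) + ρ / 2 * (tailSqDist θ s k e + tailSqDist θ s k (e + 1))

noncomputable def lyapunov (N : ℕ) (ρ : ℝ) (θ lam : ℕ → ℕ → E) (lamstar : ℕ → E) (s : E)
    (k : ℕ) : ℝ :=
  ∑ e ∈ Icc 1 (N - 1), edgeEnergy ρ θ lam lamstar s k e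

theorem lyapunov_nonneg (hρ : 0 ≤ ρ) (lamstar : ℕ → E) (s : E) (k : ℕ) :
    0 ≤ lyapunov N ρ θ lam lamstar s k :=
  sum_nonneg fun e _ => add_nonneg (by positivity)
    (mul_nonneg (by positivity) (add_nonneg (tailSqDist_nonneg s k e) (tailSqDist_nonneg s k _)))

end Normed

variable [NormedAddCommGroup E] [InnerProductSpace ℝ E] {f : ℕ → E → ℝ}

structure IsRun (N : ℕ) (f : ℕ → E → ℝ) (ρ : ℝ) (θ lam : ℕ → ℕ → E) : Prop where
  head : ∀ k n, Odd n → 1 < n → n ≤ N → ∀ x : E,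
    f n (θ (k+1) n) + ⟪lam k (n-1), θ k (n-1) - θ (k+1) n⟫
      + ⟪lam k n, θ (k+1) n - θ k (n+1)⟫
      + ρ/2 * ‖θ k (n-1) - θ (k+1) n‖^2 + ρ/2 * ‖θ (k+1) n - θ k (n+1)‖^2
    ≤ f n x + ⟪lam k (n-1), θ k (n-1) - x⟫ + ⟪lam k n, x - θ k (n+1)⟫
      + ρ/2 * ‖θ k (n-1) - x‖^2 + ρ/2 * ‖x - θ k (n+1)‖^2
  head_one : ∀ k, ∀ x : E,
    f 1 (θ (k+1) 1) + ⟪lam k 1, θ (k+1) 1 - θ k 2⟫ + ρ/2 * ‖θ (k+1) 1 - θ k 2‖^2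
    ≤ f 1 x + ⟪lam k 1, x - θ k 2⟫ + ρ/2 * ‖x - θ k 2‖^2
  tail : ∀ k n, Even n → 0 < n → n < N → ∀ x : E,
    f n (θ (k+1) n) + ⟪lam k (n-1), θ (k+1) (n-1) - θ (k+1) n⟫
      + ⟪lam k n, θ (k+1) n - θ (k+1) (n+1)⟫
      + ρ/2 * ‖θ (k+1) (n-1) - θ (k+1) n‖^2 + ρ/2 * ‖θ (k+1) n - θ (k+1) (n+1)‖^2
    ≤ f n x + ⟪lam k (n-1), θ (k+1) (n-1) - x⟫ + ⟪lam k n, x - θ (k+1) (n+1)⟫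
      + ρ/2 * ‖θ (k+1) (n-1) - x‖^2 + ρ/2 * ‖x - θ (k+1) (n+1)‖^2
  tail_last : ∀ k, ∀ x : E,
    f N (θ (k+1) N) + ⟪lam k (N-1), θ (k+1) (N-1) - θ (k+1) N⟫
      + ρ/2 * ‖θ (k+1) (N-1) - θ (k+1) N‖^2
    ≤ f N x + ⟪lam k (N-1), θ (k+1) (N-1) - x⟫ + ρ/2 * ‖θ (k+1) (N-1) - x‖^2
  dual : ∀ k n, 1 ≤ n → n ≤ N - 1 →
    lam (k+1) n = lam k n + ρ • (θ (k+1) n - θ (k+1) (n+1))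

noncomputable def localAugLagrangian (N : ℕ) (ρ : ℝ) (θ lam : ℕ → ℕ → E) (k n : ℕ) (x : E) :
    ℝ :=
  (if 2 ≤ n then augmentedTerm ρ (lam k (n - 1)) (visible θ k (n - 1)) x else 0) +
    (if n ≤ N - 1 then augmentedTerm ρ (-lam k n) (visible θ k (n + 1)) x else 0)

noncomputable def subgrad (N : ℕ) (ρ : ℝ) (θ lam : ℕ → ℕ → E) (k n : ℕ) : E :=
  (if 2 ≤ n then lam k (n - 1) + ρ • (visible θ k (n - 1) - θ (k + 1) n) else 0) +
    (if n ≤ N - 1 then -lam k n + ρ • (visible θ k (n + 1) - θ (k + 1) n) else 0)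

/-- The contributions of edge `e` to the subgradients of its endpoints `e + 1` and `e`, each
paired with that endpoint's offset from `s`. -/
noncomputable def edgePairing (ρ : ℝ) (θ lam : ℕ → ℕ → E) (s : E) (k e : ℕ) : ℝ :=
  ⟪lam k e + ρ • (visible θ k e - θ (k + 1) (e + 1)), θ (k + 1) (e + 1) - s⟫ +
    ⟪-lam k e + ρ • (visible θ k (e + 1) - θ (k + 1) e), θ (k + 1) e - s⟫

theorem hasDerivAt_localAugLagrangian (k n : ℕ) (u : E) :
    HasDerivAt (fun t : ℝ => localAugLagrangian N ρ θ lam k n (θ (k + 1) n + t • u))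
      (-⟪subgrad N ρ θ lam k n, u⟫) 0 := by
  have hleft : HasDerivAt
      (fun t : ℝ => if 2 ≤ n then
        augmentedTerm ρ (lam k (n - 1)) (visible θ k (n - 1)) (θ (k + 1) n + t • u) else 0)
      (if 2 ≤ n then -⟪lam k (n - 1) + ρ • (visible θ k (n - 1) - θ (k + 1) n), u⟫ else 0) 0 := by
    split_ifs
    exacts [hasDerivAt_augmentedTerm .., hasDerivAt_const _ _]
  have hright : HasDerivAt
      (fun t : ℝ => if n ≤ N - 1 then
        augmentedTerm ρ (-lam k n) (visible θ k (n + 1)) (θ (k + 1) n + t • u) else 0)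
      (if n ≤ N - 1 then -⟪-lam k n + ρ • (visible θ k (n + 1) - θ (k + 1) n), u⟫ else 0) 0 := by
    split_ifs
    exacts [hasDerivAt_augmentedTerm .., hasDerivAt_const _ _]
  refine (hleft.add hright).congr_deriv ?_
  unfold subgrad
  split_ifs <;> simp only [inner_add_left, inner_zero_left] <;> ring

theorem sum_inner_subgrad (s : E) (k : ℕ) :
    ∑ n ∈ Icc 1 N, ⟪subgrad N ρ θ lam k n, θ (k + 1) n - s⟫ =
      ∑ e ∈ Icc 1 (N - 1), edgePairing ρ θ lam s k e := by
  simp only [edgePairing]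
  rw [← sum_Icc_ite_add_ite]
  refine sum_congr rfl fun n hn => ?_
  rw [Nat.sub_add_cancel (mem_Icc.1 hn).1, subgrad, inner_add_left]
  split_ifs <;> simp only [inner_zero_left]

namespace IsRun

variable (h : IsRun N f ρ θ lam)
include h

theorem isMin_localAugLagrangian (hN : Even N) {k n : ℕ} (hn₁ : 1 ≤ n) (hnN : n ≤ N) (y : E) :
    f n (θ (k + 1) n) + localAugLagrangian N ρ θ lam k n (θ (k + 1) n) ≤
      f n y + localAugLagrangian N ρ θ lam k n y := by
  have hN2 := Nat.even_iff.1 hN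
  rcases Nat.even_or_odd n with hn | hn
  · have hn2 := Nat.even_iff.1 hn
    have hprev : visible θ k (n - 1) = θ (k + 1) (n - 1) :=
      visible_of_odd (Nat.odd_iff.2 (by omega))
    rcases hnN.lt_or_eq with hlt | rfl
    · have hnext : visible θ k (n + 1) = θ (k + 1) (n + 1) :=
        visible_of_odd (Nat.odd_iff.2 (by omega))
      have := h.tail k n hn (by omega) hlt y
      simp only [localAugLagrangian, if_pos (show 2 ≤ n by omega), if_pos (show n ≤ N - 1 by omega),
        augmentedTerm_neg, hprev, hnext]
      simp only [augmentedTerm]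
      linarith
    · have := h.tail_last k y
      simp only [localAugLagrangian, if_pos (show 2 ≤ n by omega),
        if_neg (show ¬n ≤ n - 1 by omega), augmentedTerm, hprev]
      linarith
  · have hn2 := Nat.odd_iff.1 hn
    have hnext : visible θ k (n + 1) = θ k (n + 1) := visible_of_even (Nat.even_iff.2 (by omega))
    rcases hn₁.eq_or_lt with rfl | hlt
    · have := h.head_one k y
      simp only [localAugLagrangian, if_neg (show ¬2 ≤ 1 by omega),
        if_pos (show 1 ≤ N - 1 by omega), augmentedTerm_neg, hnext]
      linarith
    · have hprev : visible θ k (n - 1) = θ k (n - 1) := visible_of_even (Nat.even_iff.2 (by omega))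
      have := h.head k n hn hlt hnN y
      simp only [localAugLagrangian, if_pos (show 2 ≤ n by omega), if_pos (show n ≤ N - 1 by omega),
        augmentedTerm_neg, hprev, hnext]
      simp only [augmentedTerm]
      linarith

theorem hasSubgradientAt (hN : Even N) (hconv : ∀ n, ConvexOn ℝ Set.univ (f n)) (k : ℕ)
    {n : ℕ} (hn₁ : 1 ≤ n) (hnN : n ≤ N) :
    HasSubgradientAt (f n) (subgrad N ρ θ lam k n) (θ (k + 1) n) :=
  (hconv n).hasSubgradientAt_of_isMin_add (h.isMin_localAugLagrangian hN hn₁ hnN)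
    (hasDerivAt_localAugLagrangian k n)

theorem sum_edgePairing_nonneg (hN : Even N) (hconv : ∀ n, ConvexOn ℝ Set.univ (f n))
    {lamstar : ℕ → E} {s : E} (hsaddle : ∀ th, L0 N f (fun _ => s) lamstar ≤ L0 N f th lamstar)
    (k : ℕ) :
    0 ≤ ∑ e ∈ Icc 1 (N - 1),
      (edgePairing ρ θ lam s k e + ⟪lamstar e, θ (k + 1) e - θ (k + 1) (e + 1)⟫) := by
  have hsub : ∑ n ∈ Icc 1 N, (f n (θ (k + 1) n) - f n s) ≤
      ∑ n ∈ Icc 1 N, ⟪subgrad N ρ θ lam k n, θ (k + 1) n - s⟫ := by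
    refine sum_le_sum fun n hn => ?_
    have := h.hasSubgradientAt hN hconv k (mem_Icc.1 hn).1 (mem_Icc.1 hn).2 s
    rw [← neg_sub, inner_neg_right] at this
    linarith
  have hsad := hsaddle (θ (k + 1))
  simp only [L0, sub_self, inner_zero_right, sum_const_zero, add_zero] at hsad
  rw [sum_inner_subgrad, sum_sub_distrib] at hsub
  rw [sum_add_distrib]
  linarith

theorem edgePairing_le (hρ : 0 < ρ) (lamstar : ℕ → E) (s : E) {k e : ℕ} (he₁ : 1 ≤ e)
    (he₂ : e ≤ N - 1) :
    edgePairing ρ θ lam s k e + ⟪lamstar e, θ (k + 1) e - θ (k + 1) (e + 1)⟫ ≤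
      edgeEnergy ρ θ lam lamstar s k e - edgeEnergy ρ θ lam lamstar s (k + 1) e
        - ρ / 2 * ‖θ (k + 1) e - θ (k + 1) (e + 1)‖ ^ 2
        + ρ * ⟪lag θ k (e + 1) - lag θ k e, θ (k + 1) e - θ (k + 1) (e + 1)⟫ := by
  have := admm_edge_le hρ (lam k e) (lamstar e) s (visible θ k e) (visible θ k (e + 1))
    (θ (k + 1) e) (θ (k + 1) (e + 1))
  rw [← h.dual k e he₁ he₂, sq_norm_visible_sub, sq_norm_visible_sub, sub_div] at this
  simp only [edgePairing, edgeEnergy, lag]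
  linarith

theorem subgrad_of_even {k n : ℕ} (hn : Even n) (hn₁ : 1 ≤ n) (hnN : n ≤ N) :
    subgrad N ρ θ lam k n =
      (if 2 ≤ n then lam (k + 1) (n - 1) else 0) - (if n ≤ N - 1 then lam (k + 1) n else 0) := by
  have hn2 := Nat.even_iff.1 hn
  rw [subgrad, visible_of_odd (Nat.odd_iff.2 (by omega)), visible_of_odd (Nat.odd_iff.2 (by omega))]
  split_ifs with h₂ h₃
  · rw [h.dual k (n - 1) (by omega) (by omega), h.dual k n hn₁ h₃, Nat.sub_add_cancel hn₁]
    module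
  · rw [h.dual k (n - 1) (by omega) (by omega), Nat.sub_add_cancel hn₁]
    module
  · omega
  · omega

theorem lag_inner_nonpos_of_even (hN : Even N) (hconv : ∀ n, ConvexOn ℝ Set.univ (f n))
    (hρ : 0 < ρ) {k n : ℕ} (hn : Even n) (hn₁ : 1 ≤ n) (hnN : n ≤ N) :
    (if 2 ≤ n then ⟪lag θ (k + 1) n, θ (k + 1 + 1) (n - 1) - θ (k + 1 + 1) n⟫ else 0) +
      (if n ≤ N - 1 then -⟪lag θ (k + 1) n, θ (k + 1 + 1) n - θ (k + 1 + 1) (n + 1)⟫ else 0)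
      ≤ 0 := by
  -- a tail's subgradient is `λ (n - 1) - λ n`, whose increment is `ρ` times the new residuals
  have hmono := (h.hasSubgradientAt hN hconv (k + 1) hn₁ hnN).inner_sub_nonneg
    (h.hasSubgradientAt hN hconv k hn₁ hnN)
  have h₂ : 2 ≤ n := by have := Nat.even_iff.1 hn; omega
  rw [h.subgrad_of_even hn hn₁ hnN, h.subgrad_of_even hn hn₁ hnN, if_pos h₂, if_pos h₂,
    h.dual (k + 1) (n - 1) (by omega) (by omega), Nat.sub_add_cancel hn₁] at hmono
  rw [lag, visible_of_even hn, if_pos h₂]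
  split_ifs at hmono ⊢ with h₃
  · rw [h.dual (k + 1) n hn₁ h₃] at hmono
    simp only [inner_sub_left, inner_add_left, inner_sub_right, real_inner_smul_right,
      real_inner_comm] at hmono ⊢
    nlinarith
  · simp only [inner_sub_left, inner_add_left, inner_sub_right, real_inner_smul_right,
      real_inner_comm] at hmono ⊢
    nlinarith

theorem sum_lag_inner_nonpos (hN : Even N) (hconv : ∀ n, ConvexOn ℝ Set.univ (f n))
    (hρ : 0 < ρ) (k : ℕ) :
    ∑ e ∈ Icc 1 (N - 1),
      ⟪lag θ (k + 1) (e + 1) - lag θ (k + 1) e, θ (k + 1 + 1) e - θ (k + 1 + 1) (e + 1)⟫ ≤ 0 := by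
  simp only [inner_sub_left, sub_eq_add_neg (⟪lag θ (k + 1) _, _⟫)]
  rw [← sum_Icc_ite_add_ite]
  refine sum_nonpos fun n hn => ?_
  obtain ⟨hn₁, hnN⟩ := mem_Icc.1 hn
  rw [Nat.sub_add_cancel hn₁]
  rcases Nat.even_or_odd n with hn | hn
  · exact h.lag_inner_nonpos_of_even hN hconv hρ hn hn₁ hnN
  · have hlag : lag θ (k + 1) n = 0 := by rw [lag, visible_of_odd hn, sub_self]
    simp only [hlag, inner_zero_left, neg_zero, ite_self, add_zero, le_refl]

theorem lyapunov_descent (hN : Even N) (hconv : ∀ n, ConvexOn ℝ Set.univ (f n)) (hρ : 0 < ρ)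
    {lamstar : ℕ → E} {s : E} (hsaddle : ∀ th, L0 N f (fun _ => s) lamstar ≤ L0 N f th lamstar)
    (k : ℕ) :
    lyapunov N ρ θ lam lamstar s (k + 1 + 1) + ρ / 2 * residualSq N θ (k + 1 + 1) ≤
      lyapunov N ρ θ lam lamstar s (k + 1) := by
  have hpair := h.sum_edgePairing_nonneg hN hconv hsaddle (k + 1)
  have hedge := sum_le_sum fun e he =>
    h.edgePairing_le hρ lamstar s (k := k + 1) (mem_Icc.1 he).1 (mem_Icc.1 he).2
  have hlag := mul_nonpos_of_nonneg_of_nonpos hρ.le (h.sum_lag_inner_nonpos hN hconv hρ k)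
  simp only [sum_add_distrib, sum_sub_distrib, ← mul_sum] at hpair hedge
  rw [lyapunov, lyapunov, residualSq]
  linarith

end IsRun

end GADMM

theorem gadmm_primal_residual_tendsto_zero_general
    {E : Type*} [NormedAddCommGroup E] [InnerProductSpace ℝ E]
    (N : ℕ) (hNeven : Even N)
    (f : ℕ → E → ℝ) (hconv : ∀ n, ConvexOn ℝ Set.univ (f n))
    (ρ : ℝ) (hρ : 0 < ρ)
    (θ lam : ℕ → ℕ → E)
    -- (a) head updates: interior odd workers 1 < n ≤ N
    (hHead : ∀ k n, Odd n → 1 < n → n ≤ N → ∀ x : E,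
      f n (θ (k+1) n) + ⟪lam k (n-1), θ k (n-1) - θ (k+1) n⟫
        + ⟪lam k n, θ (k+1) n - θ k (n+1)⟫
        + ρ/2 * ‖θ k (n-1) - θ (k+1) n‖^2 + ρ/2 * ‖θ (k+1) n - θ k (n+1)‖^2
      ≤ f n x + ⟪lam k (n-1), θ k (n-1) - x⟫ + ⟪lam k n, x - θ k (n+1)⟫
        + ρ/2 * ‖θ k (n-1) - x‖^2 + ρ/2 * ‖x - θ k (n+1)‖^2)
    -- (a) head update for the first worker n = 1
    (hHead1 : ∀ k, ∀ x : E,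
      f 1 (θ (k+1) 1) + ⟪lam k 1, θ (k+1) 1 - θ k 2⟫ + ρ/2 * ‖θ (k+1) 1 - θ k 2‖^2
      ≤ f 1 x + ⟪lam k 1, x - θ k 2⟫ + ρ/2 * ‖x - θ k 2‖^2)
    -- (b) tail updates: even workers 0 < n < N
    (hTail : ∀ k n, Even n → 0 < n → n < N → ∀ x : E,
      f n (θ (k+1) n) + ⟪lam k (n-1), θ (k+1) (n-1) - θ (k+1) n⟫
        + ⟪lam k n, θ (k+1) n - θ (k+1) (n+1)⟫
        + ρ/2 * ‖θ (k+1) (n-1) - θ (k+1) n‖^2 + ρ/2 * ‖θ (k+1) n - θ (k+1) (n+1)‖^2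
      ≤ f n x + ⟪lam k (n-1), θ (k+1) (n-1) - x⟫ + ⟪lam k n, x - θ (k+1) (n+1)⟫
        + ρ/2 * ‖θ (k+1) (n-1) - x‖^2 + ρ/2 * ‖x - θ (k+1) (n+1)‖^2)
    -- (b) tail update for the last worker n = N
    (hTailN : ∀ k, ∀ x : E,
      f N (θ (k+1) N) + ⟪lam k (N-1), θ (k+1) (N-1) - θ (k+1) N⟫
        + ρ/2 * ‖θ (k+1) (N-1) - θ (k+1) N‖^2
      ≤ f N x + ⟪lam k (N-1), θ (k+1) (N-1) - x⟫ + ρ/2 * ‖θ (k+1) (N-1) - x‖^2)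
    -- (c) dual updates
    (hDual : ∀ k n, 1 ≤ n → n ≤ N - 1 →
      lam (k+1) n = lam k n + ρ • (θ (k+1) n - θ (k+1) (n+1)))
    (θstar : E) (lamstar : ℕ → E)
    (hsaddle : ∀ (th la : ℕ → E),
      L0 N f (fun _ => θstar) la ≤ L0 N f (fun _ => θstar) lamstar ∧
      L0 N f (fun _ => θstar) lamstar ≤ L0 N f th lamstar) :
    ∀ n, 1 ≤ n → n ≤ N - 1 →
      Tendsto (fun k => θ k n - θ k (n+1)) atTop (𝓝 (0 : E)) := by
  have hrun : GADMM.IsRun N f ρ θ lam := ⟨hHead, hHead1, hTail, hTailN, hDual⟩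
  have hres : Tendsto (fun k => GADMM.residualSq N θ (k + 1)) atTop (𝓝 0) :=
    tendsto_zero_of_add_mul_le (half_pos hρ)
      (fun k => GADMM.lyapunov_nonneg hρ.le lamstar θstar (k + 1))
      (fun k => GADMM.residualSq_nonneg (k + 1))
      (hrun.lyapunov_descent hNeven hconv hρ fun th => (hsaddle th lamstar).2)
  intro n hn₁ hn₂
  exact tendsto_zero_of_tendsto_sum_norm_sq (v := fun k e => θ k e - θ k (e + 1))
    ((tendsto_add_atTop_iff_nat 1).1 hres) (mem_Icc.2 ⟨hn₁, hn₂⟩)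

theorem gadmm_primal_residual_tendsto_zero
    {E : Type*} [NormedAddCommGroup E] [InnerProductSpace ℝ E] [FiniteDimensional ℝ E]
    (N : ℕ) (hN : 2 ≤ N) (hNeven : Even N)
    (f : ℕ → E → ℝ) (hconv : ∀ n, ConvexOn ℝ Set.univ (f n))
    (ρ : ℝ) (hρ : 0 < ρ)
    (θ lam : ℕ → ℕ → E)
    -- (a) head updates: interior odd workers 1 < n ≤ N
    (hHead : ∀ k n, Odd n → 1 < n → n ≤ N → ∀ x : E,
      f n (θ (k+1) n) + ⟪lam k (n-1), θ k (n-1) - θ (k+1) n⟫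
        + ⟪lam k n, θ (k+1) n - θ k (n+1)⟫
        + ρ/2 * ‖θ k (n-1) - θ (k+1) n‖^2 + ρ/2 * ‖θ (k+1) n - θ k (n+1)‖^2
      ≤ f n x + ⟪lam k (n-1), θ k (n-1) - x⟫ + ⟪lam k n, x - θ k (n+1)⟫
        + ρ/2 * ‖θ k (n-1) - x‖^2 + ρ/2 * ‖x - θ k (n+1)‖^2)
    -- (a) head update for the first worker n = 1
    (hHead1 : ∀ k, ∀ x : E,
      f 1 (θ (k+1) 1) + ⟪lam k 1, θ (k+1) 1 - θ k 2⟫ + ρ/2 * ‖θ (k+1) 1 - θ k 2‖^2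
      ≤ f 1 x + ⟪lam k 1, x - θ k 2⟫ + ρ/2 * ‖x - θ k 2‖^2)
    -- (b) tail updates: even workers 0 < n < N
    (hTail : ∀ k n, Even n → 0 < n → n < N → ∀ x : E,
      f n (θ (k+1) n) + ⟪lam k (n-1), θ (k+1) (n-1) - θ (k+1) n⟫
        + ⟪lam k n, θ (k+1) n - θ (k+1) (n+1)⟫
        + ρ/2 * ‖θ (k+1) (n-1) - θ (k+1) n‖^2 + ρ/2 * ‖θ (k+1) n - θ (k+1) (n+1)‖^2
      ≤ f n x + ⟪lam k (n-1), θ (k+1) (n-1) - x⟫ + ⟪lam k n, x - θ (k+1) (n+1)⟫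
        + ρ/2 * ‖θ (k+1) (n-1) - x‖^2 + ρ/2 * ‖x - θ (k+1) (n+1)‖^2)
    -- (b) tail update for the last worker n = N
    (hTailN : ∀ k, ∀ x : E,
      f N (θ (k+1) N) + ⟪lam k (N-1), θ (k+1) (N-1) - θ (k+1) N⟫
        + ρ/2 * ‖θ (k+1) (N-1) - θ (k+1) N‖^2
      ≤ f N x + ⟪lam k (N-1), θ (k+1) (N-1) - x⟫ + ρ/2 * ‖θ (k+1) (N-1) - x‖^2)
    -- (c) dual updates
    (hDual : ∀ k n, 1 ≤ n → n ≤ N - 1 →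
      lam (k+1) n = lam k n + ρ • (θ (k+1) n - θ (k+1) (n+1)))
    (θstar : E) (lamstar : ℕ → E)
    (hsaddle : ∀ (th la : ℕ → E),
      L0 N f (fun _ => θstar) la ≤ L0 N f (fun _ => θstar) lamstar ∧
      L0 N f (fun _ => θstar) lamstar ≤ L0 N f th lamstar) :
    ∀ n, 1 ≤ n → n ≤ N - 1 →
      Tendsto (fun k => θ k n - θ k (n+1)) atTop (𝓝 (0 : E)) :=
  gadmm_primal_residual_tendsto_zero_general N hNeven f hconv ρ hρ θ lam hHead hHead1 hTail hTailN
    hDual θstar lamstar hsaddle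
end

section
/- Let N ≥ 2 workers run GADMM with penalty ρ > 0, generating primal iterates θ_n^k and dual iterates λ_n^k, and suppose the unaugmented Lagrangian L_0({θ_n},{λ_n}) = Σ_{n=1}^N f_n(θ_n) + Σ_{n=1}^{N−1} ⟨λ_n, θ_n − θ_{n+1}⟩ has a saddle point ((θ*,…,θ*), (λ_1*,…,λ_{N−1}*)). Then for every odd n the dual residual converges to zero: lim_{k→∞} s_n^k = 0, where s_n^k = ρ(θ_{n−1}^k − θ_{n−1}^{k−1}) + ρ(θ_{n+1}^k − θ_{n+1}^{k−1}) for odd n > 1 and s_1^k = ρ(θ_2^k − θ_2^{k−1}). -/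
open Finset Filter
open scoped RealInnerProductSpace Topology

/-!
GADMM is analysed like two-block ADMM, with heads and tails as the two blocks. After substituting
the dual update, the update of worker `n` says that `λ_{n-1}^{k+1} - λ_n^{k+1} - [n odd] s_n^{k+1}`
(with `λ_0 = λ_N = 0`) is a subgradient of `f_n` at `θ_n^{k+1}`. Testing these subgradient
inequalities at `θ*` and adding the saddle-point inequality shows that
`V_k = ∑_j ((1/ρ) ‖λ_j^k - λ_j*‖² + ρ ‖θ^k_{t(j)} - θ*‖²)`, where `t(j)` is the tail endpoint of
edge `j`, drops by at least `ρ ∑_j ‖θ^{k+1}_{t(j)} - θ^k_{t(j)}‖²` up to a cross term. Regrouped by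
tails, the cross term is nonpositive by monotonicity of `∂f_m` between two consecutive steps. So the
tail increments are square summable, and each `s_n^k` is a sum of tail increments.
-/

section ConvexAnalysis

variable {E : Type*} [NormedAddCommGroup E] [InnerProductSpace ℝ E]

theorem ConvexOn.le_add_inner_of_minimizes_add {f g : E → ℝ} (hf : ConvexOn ℝ Set.univ f)
    {x₀ d : E} {c : ℝ} (hg : ∀ v, g (x₀ + v) = g x₀ + ⟪d, v⟫ + c * ‖v‖ ^ 2)
    (hmin : ∀ x, f x₀ + g x₀ ≤ f x + g x) (x : E) :
    f x₀ ≤ f x + ⟪d, x - x₀⟫ := by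
  have hslope : ∀ t ∈ Set.Ioc (0 : ℝ) 1,
      f x₀ - f x - ⟪d, x - x₀⟫ ≤ c * t * ‖x - x₀‖ ^ 2 := by
    rintro t ⟨ht0, ht1⟩
    have hconv := hf.2 (Set.mem_univ x₀) (Set.mem_univ x) (sub_nonneg.2 ht1) ht0.le
      (sub_add_cancel 1 t)
    rw [show (1 - t) • x₀ + t • x = x₀ + t • (x - x₀) by module, smul_eq_mul,
      smul_eq_mul] at hconv
    have hmin_t := hmin (x₀ + t • (x - x₀))
    rw [hg, inner_smul_right, norm_smul, Real.norm_of_nonneg ht0.le] at hmin_t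
    refine le_of_mul_le_mul_left ?_ ht0
    linarith
  have hlim : Tendsto (fun t => c * t * ‖x - x₀‖ ^ 2) (𝓝[>] 0) (𝓝 0) := by
    have : Continuous (fun t : ℝ => c * t * ‖x - x₀‖ ^ 2) := by fun_prop
    simpa using this.continuousWithinAt.tendsto (x := 0) (s := Set.Ioi 0)
  have := ge_of_tendsto hlim (eventually_of_mem (Ioc_mem_nhdsGT one_pos) hslope)
  linarith

theorem ConvexOn.le_add_inner_of_minimizes_prox {f : E → ℝ} (hf : ConvexOn ℝ Set.univ f)
    {p u q w x₀ : E} {c₁ c₂ : ℝ}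
    (hmin : ∀ x, f x₀ + ⟪p, u - x₀⟫ + ⟪q, x₀ - w⟫ + c₁ / 2 * ‖u - x₀‖ ^ 2
        + c₂ / 2 * ‖x₀ - w‖ ^ 2
      ≤ f x + ⟪p, u - x⟫ + ⟪q, x - w⟫ + c₁ / 2 * ‖u - x‖ ^ 2 + c₂ / 2 * ‖x - w‖ ^ 2)
    (x : E) :
    f x₀ ≤ f x + ⟪q - p + c₁ • (x₀ - u) + c₂ • (x₀ - w), x - x₀⟫ := by
  refine hf.le_add_inner_of_minimizes_add
    (g := fun x => ⟪p, u - x⟫ + ⟪q, x - w⟫ + c₁ / 2 * ‖u - x‖ ^ 2 + c₂ / 2 * ‖x - w‖ ^ 2)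
    (c := (c₁ + c₂) / 2) (fun v => ?_) (fun x => by linarith [hmin x]) x
  rw [show u - (x₀ + v) = (u - x₀) - v by abel, show x₀ + v - w = (x₀ - w) + v by abel,
    norm_sub_sq_real, norm_add_sq_real]
  simp only [inner_add_left, inner_sub_left, inner_sub_right, inner_add_right, inner_smul_left,
    RCLike.conj_to_real]
  ring

theorem inner_sub_sub_nonpos_of_le_add_inner {f : E → ℝ} {x y d e : E}
    (hx : f x ≤ f y + ⟪d, y - x⟫) (hy : f y ≤ f x + ⟪e, x - y⟫) : ⟪e - d, y - x⟫ ≤ 0 := by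
  rw [← neg_sub y x, inner_neg_right] at hy
  rw [inner_sub_left]
  linarith

theorem edge_lyapunov_identity {ρ : ℝ} (hρ : ρ ≠ 0) (l lstar r a a' t o : E) :
    2 * (⟪l + ρ • r - lstar, r⟫ - ⟪ρ • (a' - a), t - o⟫)
      = ((1 / ρ) * ‖l + ρ • r - lstar‖ ^ 2 + ρ * ‖a' - t‖ ^ 2)
        - ((1 / ρ) * ‖l - lstar‖ ^ 2 + ρ * ‖a - t‖ ^ 2)
        + ρ * (‖r‖ ^ 2 + ‖a' - a‖ ^ 2) - 2 * ⟪ρ • (a' - a), a' - o⟫ := by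
  simp only [← real_inner_self_eq_norm_sq, inner_add_left, inner_sub_left, inner_add_right,
    inner_sub_right, inner_smul_left, inner_smul_right, RCLike.conj_to_real, real_inner_comm]
  field_simp
  ring

end ConvexAnalysis

theorem tendsto_atTop_zero_of_add_le_self {W D : ℕ → ℝ} (hW : ∀ k, 0 ≤ W k)
    (hD : ∀ k, 0 ≤ D k) (hstep : ∀ k, W (k + 1) + D k ≤ W k) : Tendsto D atTop (𝓝 0) := by
  have hpartial : ∀ n, ∑ i ∈ range n, D i + W n ≤ W 0 := by
    intro n
    induction n with
    | zero => simp
    | succ n ih => rw [sum_range_succ]; linarith [hstep n]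
  exact (summable_of_sum_range_le hD fun n => by linarith [hpartial n, hW n]).tendsto_atTop_zero

section PathGraph

/-- Edge `j` joins workers `j` and `j + 1`; its odd endpoint is a head, its even endpoint a tail. -/
def edgeHead (j : ℕ) : ℕ := j + 1 - j % 2

def edgeTail (j : ℕ) : ℕ := j + j % 2

variable {M : Type*} [AddCommMonoid M]

theorem sum_filter_edgeHead_eq {N : ℕ} (hN : Even N) (F : ℕ → M) {n : ℕ} (hn : n ∈ Icc 1 N) :
    ∑ j ∈ Icc 1 (N - 1) with edgeHead j = n, F (edgeTail j)
      = if Odd n then (if n = 1 then F 2 else F (n - 1) + F (n + 1)) else 0 := by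
  rw [Nat.even_iff] at hN
  rw [mem_Icc] at hn
  split_ifs with hodd hn1
  · rw [show (Icc 1 (N - 1)).filter (edgeHead · = n) = {1} by
      ext j; simp only [mem_filter, mem_Icc, mem_singleton]; unfold edgeHead; omega,
      sum_singleton]
    rfl
  · rw [Nat.odd_iff] at hodd
    rw [show (Icc 1 (N - 1)).filter (edgeHead · = n) = {n - 1, n} by
      ext j; simp only [mem_filter, mem_Icc, mem_insert, mem_singleton]; unfold edgeHead; omega,
      sum_pair (by omega)]
    congr 2 <;> unfold edgeTail <;> omega
  · rw [Nat.not_odd_iff_even, Nat.even_iff] at hodd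
    refine sum_eq_zero fun j hj => ?_
    simp only [mem_filter, mem_Icc] at hj
    unfold edgeHead at hj
    omega

theorem sum_filter_edgeTail_eq {N : ℕ} (F : ℕ → M) {m : ℕ} (hm : m ∈ Icc 1 N) :
    ∑ j ∈ Icc 1 (N - 1) with edgeTail j = m, F (edgeHead j)
      = if Even m then F (m - 1) + (if m < N then F (m + 1) else 0) else 0 := by
  rw [mem_Icc] at hm
  split_ifs with heven hmN
  · rw [Nat.even_iff] at heven
    rw [show (Icc 1 (N - 1)).filter (edgeTail · = m) = {m - 1, m} by
      ext j; simp only [mem_filter, mem_Icc, mem_insert, mem_singleton]; unfold edgeTail; omega,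
      sum_pair (by omega)]
    congr 2 <;> unfold edgeHead <;> omega
  · rw [Nat.even_iff] at heven
    rw [show (Icc 1 (N - 1)).filter (edgeTail · = m) = {m - 1} by
      ext j; simp only [mem_filter, mem_Icc, mem_singleton]; unfold edgeTail; omega,
      sum_singleton, add_zero]
    congr 1; unfold edgeHead; omega
  · rw [Nat.not_even_iff_odd, Nat.odd_iff] at heven
    refine sum_eq_zero fun j hj => ?_
    simp only [mem_filter, mem_Icc] at hj
    unfold edgeTail at hj
    omega

variable {G : Type*} [AddCommGroup G]

/-- The divergence at worker `n ∈ [1, N]` of a field `μ` on the edges `j → j + 1`. -/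
def pathDiv (N : ℕ) (μ : ℕ → G) (n : ℕ) : G :=
  (if n < N then μ n else 0) - (if 1 < n then μ (n - 1) else 0)

theorem pathDiv_sub_of_eq_add {N n : ℕ} {μ ν δ : ℕ → G}
    (h : ∀ j ∈ Icc 1 (N - 1), ν j = μ j + δ j) (hn : n ∈ Icc 1 N) :
    pathDiv N ν n - pathDiv N μ n = pathDiv N δ n := by
  rw [mem_Icc] at hn
  unfold pathDiv
  split_ifs
  · rw [h n (by rw [mem_Icc]; omega), h (n - 1) (by rw [mem_Icc]; omega)]; abel
  · rw [h n (by rw [mem_Icc]; omega)]; abel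
  · rw [h (n - 1) (by rw [mem_Icc]; omega)]; abel
  · simp

variable {E : Type*} [NormedAddCommGroup E] [InnerProductSpace ℝ E]

theorem sum_inner_pathDiv (N : ℕ) (μ u : ℕ → E) :
    ∑ n ∈ Icc 1 N, ⟪pathDiv N μ n, u n⟫ = ∑ j ∈ Icc 1 (N - 1), ⟪μ j, u j - u (j + 1)⟫ := by
  have inner_ite : ∀ (p : Prop) [Decidable p] (a v : E),
      ⟪if p then a else 0, v⟫ = if p then ⟪a, v⟫ else 0 := by
    intro p _ a v; split_ifs <;> simp
  have hout : ∑ n ∈ Icc 1 N, ⟪if n < N then μ n else 0, u n⟫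
      = ∑ j ∈ Icc 1 (N - 1), ⟪μ j, u j⟫ := by
    rw [funext fun n => inner_ite _ _ _, ← sum_filter]
    congr 1
    ext n; simp only [mem_filter, mem_Icc]; omega
  have hin : ∑ n ∈ Icc 1 N, ⟪if 1 < n then μ (n - 1) else 0, u n⟫
      = ∑ j ∈ Icc 1 (N - 1), ⟪μ j, u (j + 1)⟫ := by
    rw [funext fun n => inner_ite _ _ _, ← sum_filter]
    refine sum_nbij' (· - 1) (· + 1) ?_ ?_ ?_ ?_ fun n hn => ?_
    any_goals intro n hn; simp only [mem_filter, mem_Icc] at hn ⊢; omega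
    rw [Nat.sub_add_cancel (mem_filter.1 hn).2.le]
  simp only [pathDiv, inner_sub_left, inner_sub_right, sum_sub_distrib, hout, hin]

end PathGraph

section GADMM

variable {E : Type*} [NormedAddCommGroup E] [InnerProductSpace ℝ E]

/-- The dual residual `s_n^{k+1}` of the head `n`, for `θ = θ^k` and `θ' = θ^{k+1}`. -/
def dualResidual (ρ : ℝ) (θ θ' : ℕ → E) (n : ℕ) : E :=
  if n = 1 then ρ • (θ' 2 - θ 2) else ρ • (θ' (n - 1) - θ (n - 1)) + ρ • (θ' (n + 1) - θ (n + 1))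

/-- `-(pathDiv N lam' n + [n odd] s_n)` is a subgradient of `f n` at `θ' n`: the optimality
condition of a GADMM step `θ ↦ θ'` once the dual update to `lam'` is substituted. -/
def StepOptimality (N : ℕ) (f : ℕ → E → ℝ) (ρ : ℝ) (θ θ' lam' : ℕ → E) : Prop :=
  ∀ n ∈ Icc 1 N, ∀ x, f n (θ' n) ≤ f n x
    + ⟪pathDiv N lam' n + (if Odd n then dualResidual ρ θ θ' n else 0), x - θ' n⟫

theorem gadmm_stepOptimality {N : ℕ} (hNeven : Even N)
    (f : ℕ → E → ℝ) (hconv : ∀ n, ConvexOn ℝ Set.univ (f n))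
    {ρ : ℝ} (θ lam : ℕ → ℕ → E)
    (hHead : ∀ k n, Odd n → 1 < n → n ≤ N → ∀ x : E,
      f n (θ (k+1) n) + ⟪lam k (n-1), θ k (n-1) - θ (k+1) n⟫
        + ⟪lam k n, θ (k+1) n - θ k (n+1)⟫
        + ρ/2 * ‖θ k (n-1) - θ (k+1) n‖^2 + ρ/2 * ‖θ (k+1) n - θ k (n+1)‖^2
      ≤ f n x + ⟪lam k (n-1), θ k (n-1) - x⟫ + ⟪lam k n, x - θ k (n+1)⟫
        + ρ/2 * ‖θ k (n-1) - x‖^2 + ρ/2 * ‖x - θ k (n+1)‖^2)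
    (hHead1 : ∀ k, ∀ x : E,
      f 1 (θ (k+1) 1) + ⟪lam k 1, θ (k+1) 1 - θ k 2⟫ + ρ/2 * ‖θ (k+1) 1 - θ k 2‖^2
      ≤ f 1 x + ⟪lam k 1, x - θ k 2⟫ + ρ/2 * ‖x - θ k 2‖^2)
    (hTail : ∀ k n, Even n → 0 < n → n < N → ∀ x : E,
      f n (θ (k+1) n) + ⟪lam k (n-1), θ (k+1) (n-1) - θ (k+1) n⟫
        + ⟪lam k n, θ (k+1) n - θ (k+1) (n+1)⟫
        + ρ/2 * ‖θ (k+1) (n-1) - θ (k+1) n‖^2 + ρ/2 * ‖θ (k+1) n - θ (k+1) (n+1)‖^2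
      ≤ f n x + ⟪lam k (n-1), θ (k+1) (n-1) - x⟫ + ⟪lam k n, x - θ (k+1) (n+1)⟫
        + ρ/2 * ‖θ (k+1) (n-1) - x‖^2 + ρ/2 * ‖x - θ (k+1) (n+1)‖^2)
    (hTailN : ∀ k, ∀ x : E,
      f N (θ (k+1) N) + ⟪lam k (N-1), θ (k+1) (N-1) - θ (k+1) N⟫
        + ρ/2 * ‖θ (k+1) (N-1) - θ (k+1) N‖^2
      ≤ f N x + ⟪lam k (N-1), θ (k+1) (N-1) - x⟫ + ρ/2 * ‖θ (k+1) (N-1) - x‖^2)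
    (hDual : ∀ k n, 1 ≤ n → n ≤ N - 1 →
      lam (k+1) n = lam k n + ρ • (θ (k+1) n - θ (k+1) (n+1)))
    (k : ℕ) : StepOptimality N f ρ (θ k) (θ (k+1)) (lam (k+1)) := by
  intro n hn x
  rw [Nat.even_iff] at hNeven
  rw [mem_Icc] at hn
  rcases Nat.even_or_odd n with hev | hodd
  · have hn2 : 1 < n := by rw [Nat.even_iff] at hev; omega
    rw [if_neg (Nat.not_odd_iff_even.2 hev), add_zero, pathDiv, if_pos hn2,
      hDual k (n - 1) (by omega) (by omega), Nat.sub_add_cancel (by omega)]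
    rcases hn.2.lt_or_eq with hnN | rfl
    · rw [if_pos hnN, hDual k n (by omega) (by omega)]
      convert (hconv n).le_add_inner_of_minimizes_prox (hTail k n hev (by omega) hnN) x using 3
      module
    · rw [if_neg (lt_irrefl _)]
      convert (hconv n).le_add_inner_of_minimizes_prox (q := 0) (w := 0) (c₂ := 0)
        (fun y => by simpa using hTailN k y) x using 3
      module
  · have hnN : n < N := by rw [Nat.odd_iff] at hodd; omega
    rw [if_pos hodd, pathDiv, if_pos hnN, hDual k n (by omega) (by omega), dualResidual]
    rcases hn.1.lt_or_eq with hn1 | rfl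
    · rw [if_pos hn1, if_neg hn1.ne', hDual k (n - 1) (by omega) (by omega),
        Nat.sub_add_cancel (by omega)]
      convert (hconv n).le_add_inner_of_minimizes_prox (hHead k n hodd hn1 hn.2) x using 3
      module
    · rw [if_neg (lt_irrefl _), if_pos rfl]
      convert (hconv 1).le_add_inner_of_minimizes_prox (p := 0) (u := 0) (c₁ := 0)
        (fun y => by simpa using hHead1 k y) x using 3
      module

noncomputable def lyapunov (N : ℕ) (ρ : ℝ) (θstar : E) (lamstar θ lam : ℕ → E) : ℝ :=
  ∑ j ∈ Icc 1 (N - 1), ((1 / ρ) * ‖lam j - lamstar j‖ ^ 2 + ρ * ‖θ (edgeTail j) - θstar‖ ^ 2)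

def tailCross (N : ℕ) (ρ : ℝ) (θ θ' : ℕ → E) : ℝ :=
  ∑ j ∈ Icc 1 (N - 1),
    ⟪ρ • (θ' (edgeTail j) - θ (edgeTail j)), θ' (edgeTail j) - θ' (edgeHead j)⟫

theorem sum_inner_dualResidual {N : ℕ} (hNeven : Even N) (ρ : ℝ) (θ θ' u : ℕ → E) :
    ∑ n ∈ Icc 1 N, ⟪if Odd n then dualResidual ρ θ θ' n else 0, u n⟫
      = ∑ j ∈ Icc 1 (N - 1), ⟪ρ • (θ' (edgeTail j) - θ (edgeTail j)), u (edgeHead j)⟫ := by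
  have hmaps : ∀ j ∈ Icc 1 (N - 1), edgeHead j ∈ Icc 1 N := by
    intro j hj; rw [mem_Icc] at hj ⊢; unfold edgeHead; omega
  rw [← sum_fiberwise_of_maps_to hmaps]
  refine sum_congr rfl fun n hn => ?_
  rw [sum_congr rfl fun j hj => by rw [(mem_filter.1 hj).2], ← sum_inner,
    sum_filter_edgeHead_eq hNeven (fun m => ρ • (θ' m - θ m)) hn]
  rfl

theorem lyapunov_step_le {N : ℕ} (hNeven : Even N) {f : ℕ → E → ℝ} {ρ : ℝ} (hρ : ρ ≠ 0)
    {θ θ' lam lam' : ℕ → E} {θstar : E} {lamstar : ℕ → E}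
    (hopt : StepOptimality N f ρ θ θ' lam')
    (hdual : ∀ j ∈ Icc 1 (N - 1), lam' j = lam j + ρ • (θ' j - θ' (j + 1)))
    (hsaddle : L0 N f (fun _ => θstar) lamstar ≤ L0 N f θ' lamstar) :
    lyapunov N ρ θstar lamstar θ' lam' + ρ * ∑ j ∈ Icc 1 (N - 1),
        (‖θ' j - θ' (j + 1)‖ ^ 2 + ‖θ' (edgeTail j) - θ (edgeTail j)‖ ^ 2)
      ≤ lyapunov N ρ θstar lamstar θ lam + 2 * tailCross N ρ θ θ' := by
  have hsum : ∑ n ∈ Icc 1 N, f n (θ' n) ≤ ∑ n ∈ Icc 1 N, f n θstar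
      + ∑ n ∈ Icc 1 N, ⟪pathDiv N lam' n + (if Odd n then dualResidual ρ θ θ' n else 0),
          θstar - θ' n⟫ := by
    rw [← sum_add_distrib]
    exact sum_le_sum fun n hn => hopt n hn θstar
  simp only [inner_add_left, sum_add_distrib, sum_inner_pathDiv, sum_inner_dualResidual hNeven,
    sub_sub_sub_cancel_left, ← neg_sub (θ' _) (θ' (_ + 1)), inner_neg_right, sum_neg_distrib]
    at hsum
  simp only [L0, sub_self, inner_zero_right, sum_const_zero, add_zero] at hsaddle
  have hgap : ∑ j ∈ Icc 1 (N - 1), (⟪lam' j - lamstar j, θ' j - θ' (j + 1)⟫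
      - ⟪ρ • (θ' (edgeTail j) - θ (edgeTail j)), θstar - θ' (edgeHead j)⟫) ≤ 0 := by
    simp only [sum_sub_distrib, inner_sub_left]
    linarith
  have hid : lyapunov N ρ θstar lamstar θ' lam' + ρ * ∑ j ∈ Icc 1 (N - 1),
        (‖θ' j - θ' (j + 1)‖ ^ 2 + ‖θ' (edgeTail j) - θ (edgeTail j)‖ ^ 2)
      - (lyapunov N ρ θstar lamstar θ lam + 2 * tailCross N ρ θ θ')
      = 2 * ∑ j ∈ Icc 1 (N - 1), (⟪lam' j - lamstar j, θ' j - θ' (j + 1)⟫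
      - ⟪ρ • (θ' (edgeTail j) - θ (edgeTail j)), θstar - θ' (edgeHead j)⟫) := by
    simp only [lyapunov, tailCross, mul_sum, ← sum_add_distrib, ← sum_sub_distrib]
    refine sum_congr rfl fun j hj => ?_
    rw [hdual j hj, edge_lyapunov_identity hρ]
    ring
  linarith

theorem tailCross_nonpos {N : ℕ} {f : ℕ → E → ℝ} {ρ : ℝ} {θ θ' θ'' lam' lam'' : ℕ → E}
    (hopt' : StepOptimality N f ρ θ θ' lam') (hopt'' : StepOptimality N f ρ θ' θ'' lam'')
    (hdual : ∀ j ∈ Icc 1 (N - 1), lam'' j = lam' j + ρ • (θ'' j - θ'' (j + 1))) :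
    tailCross N ρ θ' θ'' ≤ 0 := by
  have hmaps : ∀ j ∈ Icc 1 (N - 1), edgeTail j ∈ Icc 1 N := by
    intro j hj; rw [mem_Icc] at hj ⊢; unfold edgeTail; omega
  unfold tailCross
  rw [← sum_fiberwise_of_maps_to hmaps]
  refine sum_nonpos fun m hm => ?_
  -- at a tail `m` the regrouped sum is `⟪θ'' m - θ' m, pathDiv N (lam'' - lam') m⟫`, which is
  -- nonpositive by monotonicity of `∂(f m)`
  rw [sum_congr rfl fun j hj => by rw [(mem_filter.1 hj).2], ← inner_sum,
    sum_filter_edgeTail_eq (fun h => θ'' m - θ'' h) hm]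
  by_cases heven : Even m
  swap
  · rw [if_neg heven, inner_zero_right]
  rw [if_pos heven]
  have hmono := inner_sub_sub_nonpos_of_le_add_inner (hopt' m hm (θ'' m)) (hopt'' m hm (θ' m))
  simp only [if_neg (Nat.not_odd_iff_even.2 heven), add_zero] at hmono
  rw [pathDiv_sub_of_eq_add hdual hm] at hmono
  have hdiv : pathDiv N (fun j => ρ • (θ'' j - θ'' (j + 1))) m
      = ρ • (θ'' m - θ'' (m - 1) + if m < N then θ'' m - θ'' (m + 1) else 0) := by
    rw [mem_Icc] at hm
    rw [Nat.even_iff] at heven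
    simp only [pathDiv, if_pos (show 1 < m by omega), Nat.sub_add_cancel hm.1]
    split_ifs <;> module
  rw [hdiv, real_inner_smul_left, real_inner_comm] at hmono
  rwa [real_inner_smul_left]

theorem tendsto_tail_increment {N : ℕ} (hNeven : Even N) {f : ℕ → E → ℝ} {ρ : ℝ} (hρ : 0 < ρ)
    {θ lam : ℕ → ℕ → E} {θstar : E} {lamstar : ℕ → E}
    (hopt : ∀ k, StepOptimality N f ρ (θ k) (θ (k + 1)) (lam (k + 1)))
    (hdual : ∀ k, ∀ j ∈ Icc 1 (N - 1),
      lam (k + 1) j = lam k j + ρ • (θ (k + 1) j - θ (k + 1) (j + 1)))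
    (hsaddle : ∀ th, L0 N f (fun _ => θstar) lamstar ≤ L0 N f th lamstar)
    {m : ℕ} (hm : m ∈ Icc 1 N) (heven : Even m) :
    Tendsto (fun k => θ (k + 1) m - θ k m) atTop (𝓝 0) := by
  set D : ℕ → ℝ := fun k => ρ * ∑ j ∈ Icc 1 (N - 1), (‖θ (k + 2) j - θ (k + 2) (j + 1)‖ ^ 2
    + ‖θ (k + 2) (edgeTail j) - θ (k + 1) (edgeTail j)‖ ^ 2)
  have hD : Tendsto D atTop (𝓝 0) :=
    tendsto_atTop_zero_of_add_le_self
      (W := fun k => lyapunov N ρ θstar lamstar (θ (k + 1)) (lam (k + 1)))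
      (fun k => sum_nonneg fun j _ => by positivity) (fun k => by positivity) fun k => by
        linarith [lyapunov_step_le hNeven hρ.ne' (hopt (k + 1)) (hdual (k + 1)) (hsaddle _),
          tailCross_nonpos (hopt k) (hopt (k + 1)) (hdual (k + 1))]
  have hedge : m - 1 ∈ Icc 1 (N - 1) ∧ edgeTail (m - 1) = m := by
    rw [mem_Icc] at hm ⊢
    rw [Nat.even_iff] at heven hNeven
    unfold edgeTail
    omega
  have hbound : ∀ k, ‖θ (k + 2) m - θ (k + 1) m‖ ≤ √(D k / ρ) := by
    intro k
    rw [Real.le_sqrt (norm_nonneg _) (by positivity), le_div_iff₀ hρ, mul_comm]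
    refine mul_le_mul_of_nonneg_left ?_ hρ.le
    refine le_trans ?_ (single_le_sum (fun j _ => by positivity) hedge.1)
    rw [hedge.2]
    exact le_add_of_nonneg_left (by positivity)
  have hlim : Tendsto (fun k => √(D k / ρ)) atTop (𝓝 0) := by
    simpa using (hD.div_const ρ).sqrt
  refine (tendsto_add_atTop_iff_nat 1).1 (tendsto_zero_iff_norm_tendsto_zero.2 ?_)
  exact squeeze_zero (fun _ => norm_nonneg _) hbound hlim

end GADMM

theorem gadmm_dual_residual_tendsto_zero_general
    {E : Type*} [NormedAddCommGroup E] [InnerProductSpace ℝ E]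
    (N : ℕ) (hNeven : Even N)
    (f : ℕ → E → ℝ) (hconv : ∀ n, ConvexOn ℝ Set.univ (f n))
    (ρ : ℝ) (hρ : 0 < ρ)
    (θ lam : ℕ → ℕ → E)
    -- (a) head updates: interior odd workers 1 < n ≤ N
    (hHead : ∀ k n, Odd n → 1 < n → n ≤ N → ∀ x : E,
      f n (θ (k+1) n) + ⟪lam k (n-1), θ k (n-1) - θ (k+1) n⟫
        + ⟪lam k n, θ (k+1) n - θ k (n+1)⟫
        + ρ/2 * ‖θ k (n-1) - θ (k+1) n‖^2 + ρ/2 * ‖θ (k+1) n - θ k (n+1)‖^2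
      ≤ f n x + ⟪lam k (n-1), θ k (n-1) - x⟫ + ⟪lam k n, x - θ k (n+1)⟫
        + ρ/2 * ‖θ k (n-1) - x‖^2 + ρ/2 * ‖x - θ k (n+1)‖^2)
    -- (a) head update for the first worker n = 1
    (hHead1 : ∀ k, ∀ x : E,
      f 1 (θ (k+1) 1) + ⟪lam k 1, θ (k+1) 1 - θ k 2⟫ + ρ/2 * ‖θ (k+1) 1 - θ k 2‖^2
      ≤ f 1 x + ⟪lam k 1, x - θ k 2⟫ + ρ/2 * ‖x - θ k 2‖^2)
    -- (b) tail updates: even workers 0 < n < N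
    (hTail : ∀ k n, Even n → 0 < n → n < N → ∀ x : E,
      f n (θ (k+1) n) + ⟪lam k (n-1), θ (k+1) (n-1) - θ (k+1) n⟫
        + ⟪lam k n, θ (k+1) n - θ (k+1) (n+1)⟫
        + ρ/2 * ‖θ (k+1) (n-1) - θ (k+1) n‖^2 + ρ/2 * ‖θ (k+1) n - θ (k+1) (n+1)‖^2
      ≤ f n x + ⟪lam k (n-1), θ (k+1) (n-1) - x⟫ + ⟪lam k n, x - θ (k+1) (n+1)⟫
        + ρ/2 * ‖θ (k+1) (n-1) - x‖^2 + ρ/2 * ‖x - θ (k+1) (n+1)‖^2)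
    -- (b) tail update for the last worker n = N
    (hTailN : ∀ k, ∀ x : E,
      f N (θ (k+1) N) + ⟪lam k (N-1), θ (k+1) (N-1) - θ (k+1) N⟫
        + ρ/2 * ‖θ (k+1) (N-1) - θ (k+1) N‖^2
      ≤ f N x + ⟪lam k (N-1), θ (k+1) (N-1) - x⟫ + ρ/2 * ‖θ (k+1) (N-1) - x‖^2)
    -- (c) dual updates
    (hDual : ∀ k n, 1 ≤ n → n ≤ N - 1 →
      lam (k+1) n = lam k n + ρ • (θ (k+1) n - θ (k+1) (n+1)))
    (θstar : E) (lamstar : ℕ → E)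
    (hsaddle : ∀ (th la : ℕ → E),
      L0 N f (fun _ => θstar) la ≤ L0 N f (fun _ => θstar) lamstar ∧
      L0 N f (fun _ => θstar) lamstar ≤ L0 N f th lamstar) :
    ∀ n, Odd n → n ≤ N →
      Tendsto (fun k =>
          if n = 1 then ρ • (θ (k+1) 2 - θ k 2)
          else ρ • (θ (k+1) (n-1) - θ k (n-1)) + ρ • (θ (k+1) (n+1) - θ k (n+1)))
        atTop (𝓝 (0 : E)) := by
  have hopt := gadmm_stepOptimality hNeven f hconv θ lam hHead hHead1 hTail hTailN hDual
  have hdual : ∀ k, ∀ j ∈ Icc 1 (N - 1),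
      lam (k+1) j = lam k j + ρ • (θ (k+1) j - θ (k+1) (j+1)) :=
    fun k j hj => hDual k j (mem_Icc.1 hj).1 (mem_Icc.1 hj).2
  have htail : ∀ m, m ∈ Icc 1 N → Even m →
      Tendsto (fun k => ρ • (θ (k+1) m - θ k m)) atTop (𝓝 0) := fun m hm heven => by
    simpa using (tendsto_tail_increment hNeven hρ hopt hdual
      (fun th => (hsaddle th lamstar).2) hm heven).const_smul ρ
  intro n hodd hnN
  rw [Nat.odd_iff] at hodd
  rw [Nat.even_iff] at hNeven
  by_cases hn1 : n = 1
  · simp only [hn1, if_true]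
    exact htail 2 (by rw [mem_Icc]; omega) even_two
  · simp only [hn1, if_false]
    simpa using (htail (n - 1) (by rw [mem_Icc]; omega) (by rw [Nat.even_iff]; omega)).add
      (htail (n + 1) (by rw [mem_Icc]; omega) (by rw [Nat.even_iff]; omega))

theorem gadmm_dual_residual_tendsto_zero
    {E : Type*} [NormedAddCommGroup E] [InnerProductSpace ℝ E] [FiniteDimensional ℝ E]
    (N : ℕ) (hN : 2 ≤ N) (hNeven : Even N)
    (f : ℕ → E → ℝ) (hconv : ∀ n, ConvexOn ℝ Set.univ (f n))
    (ρ : ℝ) (hρ : 0 < ρ)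
    (θ lam : ℕ → ℕ → E)
    -- (a) head updates: interior odd workers 1 < n ≤ N
    (hHead : ∀ k n, Odd n → 1 < n → n ≤ N → ∀ x : E,
      f n (θ (k+1) n) + ⟪lam k (n-1), θ k (n-1) - θ (k+1) n⟫
        + ⟪lam k n, θ (k+1) n - θ k (n+1)⟫
        + ρ/2 * ‖θ k (n-1) - θ (k+1) n‖^2 + ρ/2 * ‖θ (k+1) n - θ k (n+1)‖^2
      ≤ f n x + ⟪lam k (n-1), θ k (n-1) - x⟫ + ⟪lam k n, x - θ k (n+1)⟫
        + ρ/2 * ‖θ k (n-1) - x‖^2 + ρ/2 * ‖x - θ k (n+1)‖^2)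
    -- (a) head update for the first worker n = 1
    (hHead1 : ∀ k, ∀ x : E,
      f 1 (θ (k+1) 1) + ⟪lam k 1, θ (k+1) 1 - θ k 2⟫ + ρ/2 * ‖θ (k+1) 1 - θ k 2‖^2
      ≤ f 1 x + ⟪lam k 1, x - θ k 2⟫ + ρ/2 * ‖x - θ k 2‖^2)
    -- (b) tail updates: even workers 0 < n < N
    (hTail : ∀ k n, Even n → 0 < n → n < N → ∀ x : E,
      f n (θ (k+1) n) + ⟪lam k (n-1), θ (k+1) (n-1) - θ (k+1) n⟫
        + ⟪lam k n, θ (k+1) n - θ (k+1) (n+1)⟫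
        + ρ/2 * ‖θ (k+1) (n-1) - θ (k+1) n‖^2 + ρ/2 * ‖θ (k+1) n - θ (k+1) (n+1)‖^2
      ≤ f n x + ⟪lam k (n-1), θ (k+1) (n-1) - x⟫ + ⟪lam k n, x - θ (k+1) (n+1)⟫
        + ρ/2 * ‖θ (k+1) (n-1) - x‖^2 + ρ/2 * ‖x - θ (k+1) (n+1)‖^2)
    -- (b) tail update for the last worker n = N
    (hTailN : ∀ k, ∀ x : E,
      f N (θ (k+1) N) + ⟪lam k (N-1), θ (k+1) (N-1) - θ (k+1) N⟫
        + ρ/2 * ‖θ (k+1) (N-1) - θ (k+1) N‖^2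
      ≤ f N x + ⟪lam k (N-1), θ (k+1) (N-1) - x⟫ + ρ/2 * ‖θ (k+1) (N-1) - x‖^2)
    -- (c) dual updates
    (hDual : ∀ k n, 1 ≤ n → n ≤ N - 1 →
      lam (k+1) n = lam k n + ρ • (θ (k+1) n - θ (k+1) (n+1)))
    (θstar : E) (lamstar : ℕ → E)
    (hsaddle : ∀ (th la : ℕ → E),
      L0 N f (fun _ => θstar) la ≤ L0 N f (fun _ => θstar) lamstar ∧
      L0 N f (fun _ => θstar) lamstar ≤ L0 N f th lamstar) :
    ∀ n, Odd n → n ≤ N →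
      Tendsto (fun k =>
          if n = 1 then ρ • (θ (k+1) 2 - θ k 2)
          else ρ • (θ (k+1) (n-1) - θ k (n-1)) + ρ • (θ (k+1) (n+1) - θ k (n+1)))
        atTop (𝓝 (0 : E)) :=
  gadmm_dual_residual_tendsto_zero_general N hNeven f hconv ρ hρ θ lam hHead hHead1 hTail hTailN
    hDual θstar lamstar hsaddle
end

section
/- Let N ≥ 2 workers run GADMM with penalty ρ > 0, generating primal iterates θ_n^k and dual iterates λ_n^k. Then for every even n with n < N and every iteration index k, the tail worker n exactly satisfies the dual feasibility condition at the updated multipliers: 0 ∈ ∂f_n(θ_n^{k+1}) − λ_{n−1}^{k+1} + λ_n^{k+1}, i.e. λ_{n−1}^{k+1} − λ_n^{k+1} is a subgradient of f_n at θ_n^{k+1}. -/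
set_option maxHeartbeats 800000
open Finset Filter
open scoped RealInnerProductSpace Topology

theorem gadmm_tail_dual_feasibility
    {E : Type*} [NormedAddCommGroup E] [InnerProductSpace ℝ E] [FiniteDimensional ℝ E]
    (N : ℕ) (hN : 2 ≤ N) (hNeven : Even N)
    (f : ℕ → E → ℝ) (hconv : ∀ n, ConvexOn ℝ Set.univ (f n))
    (ρ : ℝ) (hρ : 0 < ρ)
    (θ lam : ℕ → ℕ → E)
    -- (a) head updates: interior odd workers 1 < n ≤ N
    (hHead : ∀ k n, Odd n → 1 < n → n ≤ N → ∀ x : E,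
      f n (θ (k+1) n) + ⟪lam k (n-1), θ k (n-1) - θ (k+1) n⟫
        + ⟪lam k n, θ (k+1) n - θ k (n+1)⟫
        + ρ/2 * ‖θ k (n-1) - θ (k+1) n‖^2 + ρ/2 * ‖θ (k+1) n - θ k (n+1)‖^2
      ≤ f n x + ⟪lam k (n-1), θ k (n-1) - x⟫ + ⟪lam k n, x - θ k (n+1)⟫
        + ρ/2 * ‖θ k (n-1) - x‖^2 + ρ/2 * ‖x - θ k (n+1)‖^2)
    -- (a) head update for the first worker n = 1
    (hHead1 : ∀ k, ∀ x : E,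
      f 1 (θ (k+1) 1) + ⟪lam k 1, θ (k+1) 1 - θ k 2⟫ + ρ/2 * ‖θ (k+1) 1 - θ k 2‖^2
      ≤ f 1 x + ⟪lam k 1, x - θ k 2⟫ + ρ/2 * ‖x - θ k 2‖^2)
    -- (b) tail updates: even workers 0 < n < N
    (hTail : ∀ k n, Even n → 0 < n → n < N → ∀ x : E,
      f n (θ (k+1) n) + ⟪lam k (n-1), θ (k+1) (n-1) - θ (k+1) n⟫
        + ⟪lam k n, θ (k+1) n - θ (k+1) (n+1)⟫
        + ρ/2 * ‖θ (k+1) (n-1) - θ (k+1) n‖^2 + ρ/2 * ‖θ (k+1) n - θ (k+1) (n+1)‖^2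
      ≤ f n x + ⟪lam k (n-1), θ (k+1) (n-1) - x⟫ + ⟪lam k n, x - θ (k+1) (n+1)⟫
        + ρ/2 * ‖θ (k+1) (n-1) - x‖^2 + ρ/2 * ‖x - θ (k+1) (n+1)‖^2)
    -- (b) tail update for the last worker n = N
    (hTailN : ∀ k, ∀ x : E,
      f N (θ (k+1) N) + ⟪lam k (N-1), θ (k+1) (N-1) - θ (k+1) N⟫
        + ρ/2 * ‖θ (k+1) (N-1) - θ (k+1) N‖^2
      ≤ f N x + ⟪lam k (N-1), θ (k+1) (N-1) - x⟫ + ρ/2 * ‖θ (k+1) (N-1) - x‖^2)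
    -- (c) dual updates
    (hDual : ∀ k n, 1 ≤ n → n ≤ N - 1 →
      lam (k+1) n = lam k n + ρ • (θ (k+1) n - θ (k+1) (n+1))) :
    ∀ k : ℕ, ∀ n, Even n → 0 < n → n < N → ∀ y : E,
      f n y ≥ f n (θ (k+1) n)
        + ⟪lam (k+1) (n-1) - lam (k+1) n, y - θ (k+1) n⟫ := by
  intro k n hn hpos hnN y
  have hn2 : 2 ≤ n := by
    rcases hn with ⟨m, rfl⟩; omega
  set θs := θ (k+1) n with hθs
  set a := θ (k+1) (n-1) with ha
  set b := θ (k+1) (n+1) with hb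
  set p := lam k (n-1) with hp
  set q := lam k n with hq
  set d := y - θs with hd
  set u := a - θs with hu
  set w := θs - b with hw
  -- dual updates
  have hD1 : lam (k+1) (n-1) = p + ρ • u := by
    have := hDual k (n-1) (by omega) (by omega)
    have hnn : n - 1 + 1 = n := by omega
    rw [hnn] at this
    rw [this]
  have hD2 : lam (k+1) n = q + ρ • w := by
    have := hDual k n (by omega) (by omega)
    rw [this]
  have hG : ⟪lam (k+1) (n-1) - lam (k+1) n, d⟫
      = ⟪p, d⟫ - ⟪q, d⟫ + ρ * ⟪u, d⟫ - ρ * ⟪w, d⟫ := by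
    rw [hD1, hD2]
    simp [inner_sub_left, inner_add_left, real_inner_smul_left]
    ring
  -- key inequality for each t ∈ (0,1]
  have key : ∀ t : ℝ, 0 < t → t ≤ 1 →
      f n θs + (⟪p, d⟫ - ⟪q, d⟫ + ρ * ⟪u, d⟫ - ρ * ⟪w, d⟫) - ρ * t * ‖d‖^2 ≤ f n y := by
    intro t ht ht1
    have hx := hTail k n hn hpos hnN (θs + t • d)
    have hcv : f n (θs + t • d) ≤ (1 - t) * f n θs + t * f n y := by
      have h := (hconv n).2 (Set.mem_univ θs) (Set.mem_univ y)
        (by linarith : (0:ℝ) ≤ 1 - t) (le_of_lt ht) (by ring)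
      have hpt : (1 - t) • θs + t • y = θs + t • d := by
        rw [hd]; module
      rwa [hpt] at h
    -- expand the quadratic terms
    have e1 : a - (θs + t • d) = u - t • d := by rw [hu]; module
    have e2 : θs + t • d - b = w + t • d := by rw [hw]; module
    have etd : ‖t • d‖^2 = t^2 * ‖d‖^2 := by
      rw [norm_smul, Real.norm_eq_abs, abs_of_pos ht, mul_pow]
    have n1 : ‖a - (θs + t • d)‖^2 = ‖u‖^2 - 2 * (t * ⟪u, d⟫) + t^2 * ‖d‖^2 := by
      rw [e1, norm_sub_sq_real, real_inner_smul_right, etd]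
    have n2 : ‖θs + t • d - b‖^2 = ‖w‖^2 + 2 * (t * ⟪w, d⟫) + t^2 * ‖d‖^2 := by
      rw [e2, norm_add_sq_real, real_inner_smul_right, etd]
    have i1 : ⟪p, a - (θs + t • d)⟫ = ⟪p, u⟫ - t * ⟪p, d⟫ := by
      rw [e1, inner_sub_right, real_inner_smul_right]
    have i2 : ⟪q, θs + t • d - b⟫ = ⟪q, w⟫ + t * ⟪q, d⟫ := by
      rw [e2, inner_add_right, real_inner_smul_right]
    rw [n1, n2, i1, i2] at hx
    -- hx : f θs + ⟪p,u⟫ + ⟪q,w⟫ + ρ/2‖u‖² + ρ/2‖w‖²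
    --   ≤ f (θs+td) + (⟪p,u⟫ - t⟪p,d⟫) + (⟪q,w⟫ + t⟪q,d⟫) + ...
    have hfac : t * (f n θs + (⟪p, d⟫ - ⟪q, d⟫ + ρ * ⟪u, d⟫ - ρ * ⟪w, d⟫)
        - ρ * t * ‖d‖^2) ≤ t * f n y := by nlinarith [hx, hcv]
    have := le_of_mul_le_mul_left (by linarith [hfac] : t * (f n θs + (⟪p, d⟫ - ⟪q, d⟫ + ρ * ⟪u, d⟫ - ρ * ⟪w, d⟫) - ρ * t * ‖d‖^2) ≤ t * f n y) ht
    linarith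
  rw [ge_iff_le, hG]
  have hfin : ∀ ε : ℝ, 0 < ε →
      f n θs + (⟪p, d⟫ - ⟪q, d⟫ + ρ * ⟪u, d⟫ - ρ * ⟪w, d⟫) ≤ f n y + ε := by
    intro ε hε
    have hden : (0:ℝ) < ρ * ‖d‖^2 + ε := by positivity
    set t := ε / (ρ * ‖d‖^2 + ε) with htdef
    have ht : 0 < t := div_pos hε hden
    have hsq : 0 ≤ ρ * ‖d‖^2 := mul_nonneg hρ.le (sq_nonneg _)
    have ht1 : t ≤ 1 := by
      rw [htdef, div_le_one hden]; linarith
    have hbound : ρ * t * ‖d‖^2 ≤ ε := by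
      have h1 : ρ * t * ‖d‖^2 = (ρ * ‖d‖^2) * t := by ring
      have h2 : (ρ * ‖d‖^2) * t ≤ (ρ * ‖d‖^2 + ε) * t :=
        mul_le_mul_of_nonneg_right (by linarith) ht.le
      have h3 : (ρ * ‖d‖^2 + ε) * t = ε := by
        rw [htdef]; field_simp
      linarith
    have := key t ht ht1
    linarith
  linarith [le_of_forall_pos_le_add hfin]
end

section
/- Let N ≥ 2 workers run GADMM with penalty ρ > 0, generating primal iterates θ_n^k and dual iterates λ_n^k. Then for every iteration index k, the first head worker n = 1 satisfies the perturbed dual feasibility inclusion 0 ∈ ∂f_1(θ_1^{k+1}) + λ_1^{k+1} + s_1^{k+1}, where s_1^{k+1} = ρ(θ_2^{k+1} − θ_2^k) is its dual residual; i.e. −λ_1^{k+1} − s_1^{k+1} is a subgradient of f_1 at θ_1^{k+1}. -/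
open Finset Filter
open scoped RealInnerProductSpace Topology

theorem gadmm_first_head_perturbed_dual_feasibility
    {E : Type*} [NormedAddCommGroup E] [InnerProductSpace ℝ E] [FiniteDimensional ℝ E]
    (N : ℕ) (hN : 2 ≤ N) (hNeven : Even N)
    (f : ℕ → E → ℝ) (hconv : ∀ n, ConvexOn ℝ Set.univ (f n))
    (ρ : ℝ) (hρ : 0 < ρ)
    (θ lam : ℕ → ℕ → E)
    -- (a) head updates: interior odd workers 1 < n ≤ N
    (hHead : ∀ k n, Odd n → 1 < n → n ≤ N → ∀ x : E,
      f n (θ (k+1) n) + ⟪lam k (n-1), θ k (n-1) - θ (k+1) n⟫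
        + ⟪lam k n, θ (k+1) n - θ k (n+1)⟫
        + ρ/2 * ‖θ k (n-1) - θ (k+1) n‖^2 + ρ/2 * ‖θ (k+1) n - θ k (n+1)‖^2
      ≤ f n x + ⟪lam k (n-1), θ k (n-1) - x⟫ + ⟪lam k n, x - θ k (n+1)⟫
        + ρ/2 * ‖θ k (n-1) - x‖^2 + ρ/2 * ‖x - θ k (n+1)‖^2)
    -- (a) head update for the first worker n = 1
    (hHead1 : ∀ k, ∀ x : E,
      f 1 (θ (k+1) 1) + ⟪lam k 1, θ (k+1) 1 - θ k 2⟫ + ρ/2 * ‖θ (k+1) 1 - θ k 2‖^2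
      ≤ f 1 x + ⟪lam k 1, x - θ k 2⟫ + ρ/2 * ‖x - θ k 2‖^2)
    -- (b) tail updates: even workers 0 < n < N
    (hTail : ∀ k n, Even n → 0 < n → n < N → ∀ x : E,
      f n (θ (k+1) n) + ⟪lam k (n-1), θ (k+1) (n-1) - θ (k+1) n⟫
        + ⟪lam k n, θ (k+1) n - θ (k+1) (n+1)⟫
        + ρ/2 * ‖θ (k+1) (n-1) - θ (k+1) n‖^2 + ρ/2 * ‖θ (k+1) n - θ (k+1) (n+1)‖^2
      ≤ f n x + ⟪lam k (n-1), θ (k+1) (n-1) - x⟫ + ⟪lam k n, x - θ (k+1) (n+1)⟫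
        + ρ/2 * ‖θ (k+1) (n-1) - x‖^2 + ρ/2 * ‖x - θ (k+1) (n+1)‖^2)
    -- (b) tail update for the last worker n = N
    (hTailN : ∀ k, ∀ x : E,
      f N (θ (k+1) N) + ⟪lam k (N-1), θ (k+1) (N-1) - θ (k+1) N⟫
        + ρ/2 * ‖θ (k+1) (N-1) - θ (k+1) N‖^2
      ≤ f N x + ⟪lam k (N-1), θ (k+1) (N-1) - x⟫ + ρ/2 * ‖θ (k+1) (N-1) - x‖^2)
    -- (c) dual updates
    (hDual : ∀ k n, 1 ≤ n → n ≤ N - 1 →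
      lam (k+1) n = lam k n + ρ • (θ (k+1) n - θ (k+1) (n+1))) :
    ∀ k : ℕ, ∀ y : E,
      f 1 y ≥ f 1 (θ (k+1) 1)
        + ⟪-lam (k+1) 1 - ρ • (θ (k+1) 2 - θ k 2), y - θ (k+1) 1⟫ := by
  intro k y
  have hN1 : (1:ℕ) ≤ N - 1 := by omega
  have hd := hDual k 1 le_rfl hN1
  set A := θ (k+1) 1 with hA
  set c := θ k 2 with hc
  set l := lam k 1 with hl
  have hvec : -lam (k+1) 1 - ρ • (θ (k+1) 2 - θ k 2) = -l - ρ • (A - c) := by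
    rw [hd]; module
  rw [hvec, ge_iff_le]
  set d := y - A with hdd
  have hg : ⟪-l - ρ • (A - c), d⟫ = -⟪l, d⟫ - ρ * ⟪A - c, d⟫ := by
    rw [inner_sub_left, inner_neg_left, real_inner_smul_left]
  rw [hg]
  refine le_of_forall_pos_le_add fun ε hε => ?_
  set t : ℝ := min 1 (ε / (ρ/2 * ‖d‖^2 + 1)) with ht
  have hden : (0:ℝ) < ρ/2 * ‖d‖^2 + 1 := by positivity
  have ht0 : 0 < t := lt_min one_pos (div_pos hε hden)
  have ht1 : t ≤ 1 := min_le_left _ _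
  have htε : ρ/2 * ‖d‖^2 * t ≤ ε := by
    have h2 : t ≤ ε / (ρ/2 * ‖d‖^2 + 1) := min_le_right _ _
    have h3 : ρ/2 * ‖d‖^2 * t ≤ (ρ/2 * ‖d‖^2 + 1) * (ε / (ρ/2 * ‖d‖^2 + 1)) := by
      nlinarith [norm_nonneg d, sq_nonneg ‖d‖, ht0.le]
    rwa [mul_div_cancel₀ _ (ne_of_gt hden)] at h3
  have hx := hHead1 k (A + t • d)
  have hcv := (hconv 1).2 (Set.mem_univ A) (Set.mem_univ y)
    (by linarith : (0:ℝ) ≤ 1 - t) ht0.le (by ring)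
  have hpt : (1 - t) • A + t • y = A + t • d := by
    rw [hdd]; module
  rw [hpt] at hcv
  have hsplit : A + t • d - c = (A - c) + t • d := by abel
  have hnorm : ‖A + t • d - c‖^2 = ‖A - c‖^2 + 2*(t*⟪A - c, d⟫) + t^2*‖d‖^2 := by
    rw [hsplit, @norm_add_sq_real, real_inner_smul_right, norm_smul,
      Real.norm_eq_abs, abs_of_nonneg ht0.le, mul_pow]
  have hinner1 : ⟪l, A + t • d - c⟫ = ⟪l, A - c⟫ + t*⟪l, d⟫ := by
    rw [hsplit, inner_add_right, real_inner_smul_right]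
  rw [hnorm, hinner1] at hx
  rw [show θ (k+1) 1 = A from rfl, show θ k 2 = c from rfl,
    show lam k 1 = l from rfl] at hx
  simp only [smul_eq_mul] at hcv
  -- combine
  have key : 0 ≤ t * (f 1 y - f 1 A + ⟪l, d⟫ + ρ * ⟪A - c, d⟫ + ρ/2 * t * ‖d‖^2) := by
    nlinarith [hx, hcv]
  have key2 : 0 ≤ f 1 y - f 1 A + ⟪l, d⟫ + ρ * ⟪A - c, d⟫ + ρ/2 * t * ‖d‖^2 :=
    nonneg_of_mul_nonneg_right key ht0
  nlinarith [key2, htε]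
end

section
/- Let N ≥ 2 workers run GADMM with penalty ρ > 0, generating primal iterates θ_n^k and dual iterates λ_n^k, and suppose the unaugmented Lagrangian L_0({θ_n},{λ_n}) = Σ_{n=1}^N f_n(θ_n) + Σ_{n=1}^{N−1} ⟨λ_n, θ_n − θ_{n+1}⟩ has a saddle point ((θ*,…,θ*), (λ_1*,…,λ_{N−1}*)). Define the Lyapunov function V_k = (1/ρ) Σ_{n=1}^{N−1} ‖λ_n^k − λ_n*‖² + ρ Σ_{n odd, n>1} ‖θ_{n−1}^k − θ*‖² + ρ Σ_{n odd} ‖θ_{n+1}^k − θ*‖². Then V_k is monotonically non-increasing along the GADMM iterates: V_{k+1} ≤ V_k for all k. -/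
/-!
Each GADMM update minimizes `f_n` plus a differentiable penalty, so its first-order condition
says that `-g_n` is a subgradient of `f_n` at `θ_n^{k+1}`, where `g_n` is the difference of the
multipliers (dual variable plus linearized penalty) of the two edges at worker `n`. Testing these
subgradient inequalities at `θ*`, adding the saddle inequality `L_0(θ*, λ*) ≤ L_0(θ^{k+1}, λ*)` and
summing by parts along the path `1 — 2 — ⋯ — N` leaves a nonpositive sum of one term per edge.
On each edge the head was updated against the tail's old value and the tail against the head's
new one, so one of the two multipliers is `λ^{k+1}`; a three-point identity then shows that twice
the edge term is that edge's share of `V_{k+1} - V_k` plus `ρ ‖θ_head^{k+1} - θ_tail^k‖²`.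
-/

open Finset Filter
open scoped RealInnerProductSpace Topology

theorem ConvexOn.sub_fderiv_le_of_isMinOn_add {F : Type*} [NormedAddCommGroup F]
    [NormedSpace ℝ F] {s : Set F} {f g : F → ℝ} {g' : F →L[ℝ] ℝ} {p x : F}
    (hf : ConvexOn ℝ s f) (hp : p ∈ s) (hx : x ∈ s) (hg : HasFDerivAt g g' p)
    (hmin : IsMinOn (f + g) s p) : f p - g' (x - p) ≤ f x := by
  set u := x - p
  let φ : ℝ → ℝ := fun t => g (p + t • u) + t * (f x - f p)
  have hφ : HasDerivAt φ (g' u + (f x - f p)) 0 := by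
    have hline : HasDerivAt (fun t : ℝ => p + t • u) u 0 := by
      simpa using ((hasDerivAt_id (0 : ℝ)).smul_const u).const_add p
    have hg0 : HasFDerivAt g g' (p + (0 : ℝ) • u) := by simpa using hg
    exact (hg0.comp_hasDerivAt 0 hline).add (hasDerivAt_mul_const (f x - f p))
  -- convexity bounds `f` on the segment by its chord, so `φ` dominates `f + g - f p` there
  have hφmin : IsMinOn φ (Set.Icc 0 1) 0 := by
    intro t ⟨ht0, ht1⟩
    have hseg : p + t • u = (1 - t) • p + t • x := by simp only [u]; module
    have hchord := hf.2 hp hx (sub_nonneg.2 ht1) ht0 (sub_add_cancel 1 t)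
    have hle := hmin (hf.1 hp hx (sub_nonneg.2 ht1) ht0 (sub_add_cancel 1 t))
    simp only [Set.mem_ofPred_eq, Pi.add_apply, smul_eq_mul] at hle hchord
    simp only [φ, Set.mem_ofPred_eq, hseg, zero_smul, add_zero, zero_mul]
    linarith
  have hdir : (1 : ℝ) ∈ posTangentConeAt (Set.Icc 0 1) 0 :=
    mem_posTangentConeAt_of_segment_subset (by simp [segment_eq_Icc])
  have hslope : 0 ≤ g' u + (f x - f p) := by
    simpa using hφmin.localize.hasFDerivWithinAt_nonneg hφ.hasFDerivAt.hasFDerivWithinAt hdir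
  linarith

theorem Finset.sum_Icc_pred_eq_of_zero {N : ℕ} {b : ℕ → ℝ} (hb : b 0 = 0) :
    ∑ n ∈ Icc 1 N, b (n - 1) = ∑ n ∈ Icc 1 (N - 1), b n := by
  induction N with
  | zero => rfl
  | succ m ih =>
    rw [sum_Icc_succ_top (by omega), ih]
    rcases m with _ | m
    · simp [hb]
    · rw [Nat.add_sub_cancel, Nat.add_sub_cancel, sum_Icc_succ_top (by omega)]

theorem Finset.sum_Icc_eq_of_last_zero {N : ℕ} {a : ℕ → ℝ} (ha : a N = 0) :
    ∑ n ∈ Icc 1 N, a n = ∑ n ∈ Icc 1 (N - 1), a n := by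
  rcases N with _ | m
  · rfl
  · rw [sum_Icc_succ_top (by omega), ha, add_zero, Nat.add_sub_cancel]

namespace GADMM

variable {E : Type*} [NormedAddCommGroup E] [InnerProductSpace ℝ E]

theorem hasFDerivAt_penalty (c₁ c₂ a b p : E) (ρ₁ ρ₂ : ℝ) :
    HasFDerivAt (fun x : E => ⟪c₁, a - x⟫ + ⟪c₂, x - b⟫ + ρ₁ / 2 * ‖a - x‖ ^ 2
        + ρ₂ / 2 * ‖x - b‖ ^ 2)
      (innerSL ℝ ((c₂ + ρ₂ • (p - b)) - (c₁ + ρ₁ • (a - p)))) p := by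
  have hl : HasFDerivAt (fun x : E => a - x) (-ContinuousLinearMap.id ℝ E) p :=
    (hasFDerivAt_id p).const_sub a
  have hr : HasFDerivAt (fun x : E => x - b) (ContinuousLinearMap.id ℝ E) p :=
    (hasFDerivAt_id p).sub_const b
  refine ((((hasFDerivAt_const c₁ p).inner ℝ hl).add ((hasFDerivAt_const c₂ p).inner ℝ hr)).add
    (hl.norm_sq.const_mul (ρ₁ / 2))).add (hr.norm_sq.const_mul (ρ₂ / 2)) |>.congr_fderiv ?_
  ext u
  simp only [map_sub, ContinuousLinearMap.comp_neg, ContinuousLinearMap.comp_id, neg_sub,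
    add_apply, ContinuousLinearMap.comp_apply, ContinuousLinearMap.prod_apply, zero_apply,
    neg_apply, ContinuousLinearMap.id_apply, fderivInnerCLM_apply, inner_neg_right,
    inner_zero_left, add_zero, smul_apply, sub_apply, coe_innerSL_apply, nsmul_eq_mul,
    Nat.cast_ofNat, smul_eq_mul, map_add, map_smul]
  ring

theorem update_optimality {f : E → ℝ} (hf : ConvexOn ℝ Set.univ f)
    {ρ₁ ρ₂ : ℝ} {c₁ c₂ a b p : E}
    (hmin : ∀ x : E, f p + ⟪c₁, a - p⟫ + ⟪c₂, p - b⟫ + ρ₁ / 2 * ‖a - p‖ ^ 2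
        + ρ₂ / 2 * ‖p - b‖ ^ 2
      ≤ f x + ⟪c₁, a - x⟫ + ⟪c₂, x - b⟫ + ρ₁ / 2 * ‖a - x‖ ^ 2 + ρ₂ / 2 * ‖x - b‖ ^ 2)
    (x : E) :
    f p + ⟪(c₂ + ρ₂ • (p - b)) - (c₁ + ρ₁ • (a - p)), p - x⟫ ≤ f x := by
  have hopt := hf.sub_fderiv_le_of_isMinOn_add (Set.mem_univ p) (Set.mem_univ x)
    (hasFDerivAt_penalty c₁ c₂ a b p ρ₁ ρ₂)
    (fun y _ => by simp only [Set.mem_ofPred_eq, Pi.add_apply]; linarith [hmin y])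
  simp only [coe_innerSL_apply] at hopt
  rwa [← neg_sub p x, inner_neg_right, sub_neg_eq_add] at hopt

/-- What remains of edge `(P, Q)` after summing the workers' optimality conditions against the
saddle point `(z, μ)`; `ℓ` and `r` are the multipliers with which `P` and `Q` were updated. -/
def edgeGap (ℓ r μ P Q z : E) : ℝ :=
  ⟪ℓ, P - z⟫ - ⟪r, Q - z⟫ - ⟪μ, P - Q⟫

-- `P` was updated first, against the old value `T` of `Q`; then `Q` against the new `P`.
theorem two_mul_edgeGap_of_left_first {ρ : ℝ} (hρ : ρ ≠ 0) (L μ P Q T z : E) :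
    2 * edgeGap (L + ρ • (P - T)) (L + ρ • (P - Q)) μ P Q z
      = (1 / ρ) * (‖L + ρ • (P - Q) - μ‖ ^ 2 - ‖L - μ‖ ^ 2) + ρ * ‖P - T‖ ^ 2
        + ρ * (‖Q - z‖ ^ 2 - ‖T - z‖ ^ 2) := by
  simp only [edgeGap, ← real_inner_self_eq_norm_sq, inner_add_left, inner_sub_left,
    inner_add_right, inner_sub_right, real_inner_smul_left, real_inner_smul_right]
  simp only [real_inner_comm]
  field_simp
  ring

theorem two_mul_edgeGap_of_right_first {ρ : ℝ} (hρ : ρ ≠ 0) (L μ P Q S z : E) :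
    2 * edgeGap (L + ρ • (P - Q)) (L + ρ • (S - Q)) μ P Q z
      = (1 / ρ) * (‖L + ρ • (P - Q) - μ‖ ^ 2 - ‖L - μ‖ ^ 2) + ρ * ‖S - Q‖ ^ 2
        + ρ * (‖P - z‖ ^ 2 - ‖S - z‖ ^ 2) := by
  simp only [edgeGap, ← real_inner_self_eq_norm_sq, inner_add_left, inner_sub_left,
    inner_add_right, inner_sub_right, real_inner_smul_left, real_inner_smul_right]
  simp only [real_inner_comm]
  field_simp
  ring

theorem sum_edgeGap_nonpos {N : ℕ} {f : ℕ → E → ℝ} {p ℓ r μ : ℕ → E} {z : E}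
    (hℓ : ℓ N = 0) (hr : r 0 = 0)
    (hopt : ∀ n ∈ Icc 1 N, f n (p n) + ⟪ℓ n - r (n - 1), p n - z⟫ ≤ f n z)
    (hsaddle : L0 N f (fun _ => z) μ ≤ L0 N f p μ) :
    ∑ e ∈ Icc 1 (N - 1), edgeGap (ℓ e) (r e) (μ e) (p e) (p (e + 1)) z ≤ 0 := by
  have hsum := sum_le_sum hopt
  simp only [L0, sub_self, inner_zero_right, sum_const_zero, add_zero] at hsaddle
  have hparts : ∑ n ∈ Icc 1 N, ⟪ℓ n - r (n - 1), p n - z⟫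
      = ∑ e ∈ Icc 1 (N - 1), (⟪ℓ e, p e - z⟫ - ⟪r e, p (e + 1) - z⟫) := by
    have hshift : ∑ n ∈ Icc 1 N, ⟪r (n - 1), p n - z⟫
        = ∑ n ∈ Icc 1 N, ⟪r (n - 1), p (n - 1 + 1) - z⟫ :=
      sum_congr rfl fun n hn => by rw [Nat.sub_add_cancel (mem_Icc.1 hn).1]
    simp only [inner_sub_left, sum_sub_distrib]
    rw [hshift, sum_Icc_eq_of_last_zero (a := fun n => ⟪ℓ n, p n - z⟫) (by simp [hℓ]),
      sum_Icc_pred_eq_of_zero (b := fun n => ⟪r n, p (n + 1) - z⟫) (by simp [hr])]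
  rw [sum_add_distrib, hparts] at hsum
  simp only [edgeGap, sum_sub_distrib] at hsum ⊢
  linarith

/-- The tail (even endpoint) of edge `e`, which joins workers `e` and `e + 1`. -/
def evenEnd (e : ℕ) : ℕ := if Odd e then e + 1 else e

theorem sum_filter_odd_pred_add_sum_filter_odd_succ {N : ℕ} (hN : Even N) (g : ℕ → ℝ) :
    ∑ n ∈ (Icc 1 N).filter (fun n => Odd n ∧ 1 < n), g (n - 1)
      + ∑ n ∈ (Icc 1 N).filter (fun n => Odd n), g (n + 1)
    = ∑ e ∈ Icc 1 (N - 1), g (evenEnd e) := by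
  rw [← sum_filter_add_sum_filter_not (Icc 1 (N - 1)) Odd,
    add_comm (∑ e ∈ (Icc 1 (N - 1)).filter Odd, _)]
  rw [Nat.even_iff] at hN
  congr 1
  · refine sum_nbij' (· - 1) (· + 1) ?_ ?_ ?_ ?_ ?_
    all_goals simp only [mem_filter, mem_Icc, Nat.odd_iff]
    · intro n hn; omega
    · intro e he; omega
    · intro n hn; omega
    · intro e he; omega
    · intro n hn
      rw [evenEnd, if_neg (by rw [Nat.odd_iff]; omega)]
  · refine sum_congr ?_ fun e he => ?_
    · ext n; simp only [mem_filter, mem_Icc, Nat.odd_iff]; omega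
    · rw [evenEnd, if_pos (mem_filter.1 he).2]

/-- The value of a neighbour `m` that worker `n` uses in round `k + 1`: the heads (odd workers)
are updated first, against their neighbours' old values, then the tails against the new ones. -/
def seenBy (θ : ℕ → ℕ → E) (k n m : ℕ) : E := θ (if Odd n then k else k + 1) m

/-- The multiplier of edge `e` in the update of worker `e`; there is no edge `N`, so it is `0`
there. -/
def leftMult (N : ℕ) (ρ : ℝ) (θ lam : ℕ → ℕ → E) (k e : ℕ) : E :=
  if e = N then 0 else lam k e + ρ • (θ (k + 1) e - seenBy θ k e (e + 1))

/-- The multiplier of edge `e` in the update of worker `e + 1`; there is no edge `0`, so it is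
`0` there. -/
def rightMult (ρ : ℝ) (θ lam : ℕ → ℕ → E) (k e : ℕ) : E :=
  if e = 0 then 0 else lam k e + ρ • (seenBy θ k (e + 1) e - θ (k + 1) (e + 1))

theorem edge_lyapunov_le {N : ℕ} {ρ : ℝ} (hρ : 0 < ρ) {θ lam : ℕ → ℕ → E} {k e : ℕ}
    (he : e ≠ 0) (heN : e ≠ N)
    (hdual : lam (k + 1) e = lam k e + ρ • (θ (k + 1) e - θ (k + 1) (e + 1))) (μ z : E) :
    (1 / ρ) * ‖lam (k + 1) e - μ‖ ^ 2 + ρ * ‖θ (k + 1) (evenEnd e) - z‖ ^ 2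
      ≤ (1 / ρ) * ‖lam k e - μ‖ ^ 2 + ρ * ‖θ k (evenEnd e) - z‖ ^ 2
        + 2 * edgeGap (leftMult N ρ θ lam k e) (rightMult ρ θ lam k e) μ
          (θ (k + 1) e) (θ (k + 1) (e + 1)) z := by
  simp only [leftMult, rightMult, seenBy, evenEnd, if_neg he, if_neg heN, Nat.odd_add_one, hdual]
  by_cases hodd : Odd e
  · simp only [hodd, not_true_eq_false, if_true, if_false]
    rw [two_mul_edgeGap_of_left_first hρ.ne']
    linarith [mul_nonneg hρ.le (sq_nonneg ‖θ (k + 1) e - θ k (e + 1)‖)]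
  · simp only [hodd, not_false_eq_true, if_true, if_false]
    rw [two_mul_edgeGap_of_right_first hρ.ne']
    linarith [mul_nonneg hρ.le (sq_nonneg ‖θ k e - θ (k + 1) (e + 1)‖)]

end GADMM

open GADMM

theorem gadmm_lyapunov_monotone_general
    {E : Type*} [NormedAddCommGroup E] [InnerProductSpace ℝ E]
    (N : ℕ) (hNeven : Even N)
    (f : ℕ → E → ℝ) (hconv : ∀ n, ConvexOn ℝ Set.univ (f n))
    (ρ : ℝ) (hρ : 0 < ρ)
    (θ lam : ℕ → ℕ → E)
    -- (a) head updates: interior odd workers 1 < n ≤ N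
    (hHead : ∀ k n, Odd n → 1 < n → n ≤ N → ∀ x : E,
      f n (θ (k+1) n) + ⟪lam k (n-1), θ k (n-1) - θ (k+1) n⟫
        + ⟪lam k n, θ (k+1) n - θ k (n+1)⟫
        + ρ/2 * ‖θ k (n-1) - θ (k+1) n‖^2 + ρ/2 * ‖θ (k+1) n - θ k (n+1)‖^2
      ≤ f n x + ⟪lam k (n-1), θ k (n-1) - x⟫ + ⟪lam k n, x - θ k (n+1)⟫
        + ρ/2 * ‖θ k (n-1) - x‖^2 + ρ/2 * ‖x - θ k (n+1)‖^2)
    -- (a) head update for the first worker n = 1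
    (hHead1 : ∀ k, ∀ x : E,
      f 1 (θ (k+1) 1) + ⟪lam k 1, θ (k+1) 1 - θ k 2⟫ + ρ/2 * ‖θ (k+1) 1 - θ k 2‖^2
      ≤ f 1 x + ⟪lam k 1, x - θ k 2⟫ + ρ/2 * ‖x - θ k 2‖^2)
    -- (b) tail updates: even workers 0 < n < N
    (hTail : ∀ k n, Even n → 0 < n → n < N → ∀ x : E,
      f n (θ (k+1) n) + ⟪lam k (n-1), θ (k+1) (n-1) - θ (k+1) n⟫
        + ⟪lam k n, θ (k+1) n - θ (k+1) (n+1)⟫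
        + ρ/2 * ‖θ (k+1) (n-1) - θ (k+1) n‖^2 + ρ/2 * ‖θ (k+1) n - θ (k+1) (n+1)‖^2
      ≤ f n x + ⟪lam k (n-1), θ (k+1) (n-1) - x⟫ + ⟪lam k n, x - θ (k+1) (n+1)⟫
        + ρ/2 * ‖θ (k+1) (n-1) - x‖^2 + ρ/2 * ‖x - θ (k+1) (n+1)‖^2)
    -- (b) tail update for the last worker n = N
    (hTailN : ∀ k, ∀ x : E,
      f N (θ (k+1) N) + ⟪lam k (N-1), θ (k+1) (N-1) - θ (k+1) N⟫
        + ρ/2 * ‖θ (k+1) (N-1) - θ (k+1) N‖^2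
      ≤ f N x + ⟪lam k (N-1), θ (k+1) (N-1) - x⟫ + ρ/2 * ‖θ (k+1) (N-1) - x‖^2)
    -- (c) dual updates
    (hDual : ∀ k n, 1 ≤ n → n ≤ N - 1 →
      lam (k+1) n = lam k n + ρ • (θ (k+1) n - θ (k+1) (n+1)))
    (θstar : E) (lamstar : ℕ → E)
    (hsaddle : ∀ (th la : ℕ → E),
      L0 N f (fun _ => θstar) la ≤ L0 N f (fun _ => θstar) lamstar ∧
      L0 N f (fun _ => θstar) lamstar ≤ L0 N f th lamstar) :
    ∀ k : ℕ,
      (1/ρ) * ∑ n ∈ Icc 1 (N-1), ‖lam (k+1) n - lamstar n‖^2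
        + ρ * ∑ n ∈ (Icc 1 N).filter (fun n => Odd n ∧ 1 < n), ‖θ (k+1) (n-1) - θstar‖^2
        + ρ * ∑ n ∈ (Icc 1 N).filter (fun n => Odd n), ‖θ (k+1) (n+1) - θstar‖^2
      ≤ (1/ρ) * ∑ n ∈ Icc 1 (N-1), ‖lam k n - lamstar n‖^2
        + ρ * ∑ n ∈ (Icc 1 N).filter (fun n => Odd n ∧ 1 < n), ‖θ k (n-1) - θstar‖^2
        + ρ * ∑ n ∈ (Icc 1 N).filter (fun n => Odd n), ‖θ k (n+1) - θstar‖^2 := by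
  intro k
  have hopt : ∀ n ∈ Icc 1 N, f n (θ (k + 1) n)
      + ⟪leftMult N ρ θ lam k n - rightMult ρ θ lam k (n - 1), θ (k + 1) n - θstar⟫
      ≤ f n θstar := by
    intro n hn
    obtain ⟨hn1, hnN⟩ := mem_Icc.1 hn
    have hsub : n - 1 + 1 = n := Nat.sub_add_cancel hn1
    obtain rfl | hn1 := hn1.eq_or_lt
    · have hN1 : 1 ≠ N := fun h => Nat.not_even_one (h ▸ hNeven)
      simpa [leftMult, rightMult, seenBy, hN1] using
        update_optimality (hconv 1) (c₁ := 0) (a := 0) (ρ₁ := 0) (b := θ k 2)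
          (fun x => by simpa using hHead1 k x) θstar
    have hn0 : n - 1 ≠ 0 := by omega
    obtain rfl | hnN := hnN.eq_or_lt
    · simpa [leftMult, rightMult, seenBy, hsub, hn0, ← Nat.not_even_iff_odd, hNeven] using
        update_optimality (hconv n) (c₂ := 0) (b := 0) (ρ₂ := 0) (a := θ (k + 1) (n - 1))
          (fun x => by simpa using hTailN k x) θstar
    rcases Nat.even_or_odd n with hev | hodd
    · simpa [leftMult, rightMult, seenBy, hsub, hn0, hnN.ne, ← Nat.not_even_iff_odd, hev] using
        update_optimality (hconv n) (hTail k n hev (by omega) hnN) θstar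
    · simpa [leftMult, rightMult, seenBy, hsub, hn0, hnN.ne, hodd] using
        update_optimality (hconv n) (hHead k n hodd hn1 hnN.le) θstar
  have hgap := sum_edgeGap_nonpos (ℓ := leftMult N ρ θ lam k) (r := rightMult ρ θ lam k)
    (if_pos rfl) (if_pos rfl) hopt (hsaddle (θ (k + 1)) lamstar).2
  have hdesc := sum_le_sum fun e (he : e ∈ Icc 1 (N - 1)) => by
    obtain ⟨he1, heN⟩ := mem_Icc.1 he
    exact edge_lyapunov_le (N := N) hρ (by omega) (by omega) (hDual k e he1 heN) (lamstar e) θstar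
  simp only [sum_add_distrib, ← mul_sum] at hdesc
  have h1 := sum_filter_odd_pred_add_sum_filter_odd_succ hNeven (fun m => ‖θ (k + 1) m - θstar‖ ^ 2)
  have h0 := sum_filter_odd_pred_add_sum_filter_odd_succ hNeven (fun m => ‖θ k m - θstar‖ ^ 2)
  linear_combination hdesc + 2 * hgap + ρ * h1 - ρ * h0

theorem gadmm_lyapunov_monotone
    {E : Type*} [NormedAddCommGroup E] [InnerProductSpace ℝ E] [FiniteDimensional ℝ E]
    (N : ℕ) (hN : 2 ≤ N) (hNeven : Even N)
    (f : ℕ → E → ℝ) (hconv : ∀ n, ConvexOn ℝ Set.univ (f n))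
    (ρ : ℝ) (hρ : 0 < ρ)
    (θ lam : ℕ → ℕ → E)
    -- (a) head updates: interior odd workers 1 < n ≤ N
    (hHead : ∀ k n, Odd n → 1 < n → n ≤ N → ∀ x : E,
      f n (θ (k+1) n) + ⟪lam k (n-1), θ k (n-1) - θ (k+1) n⟫
        + ⟪lam k n, θ (k+1) n - θ k (n+1)⟫
        + ρ/2 * ‖θ k (n-1) - θ (k+1) n‖^2 + ρ/2 * ‖θ (k+1) n - θ k (n+1)‖^2
      ≤ f n x + ⟪lam k (n-1), θ k (n-1) - x⟫ + ⟪lam k n, x - θ k (n+1)⟫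
        + ρ/2 * ‖θ k (n-1) - x‖^2 + ρ/2 * ‖x - θ k (n+1)‖^2)
    -- (a) head update for the first worker n = 1
    (hHead1 : ∀ k, ∀ x : E,
      f 1 (θ (k+1) 1) + ⟪lam k 1, θ (k+1) 1 - θ k 2⟫ + ρ/2 * ‖θ (k+1) 1 - θ k 2‖^2
      ≤ f 1 x + ⟪lam k 1, x - θ k 2⟫ + ρ/2 * ‖x - θ k 2‖^2)
    -- (b) tail updates: even workers 0 < n < N
    (hTail : ∀ k n, Even n → 0 < n → n < N → ∀ x : E,
      f n (θ (k+1) n) + ⟪lam k (n-1), θ (k+1) (n-1) - θ (k+1) n⟫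
        + ⟪lam k n, θ (k+1) n - θ (k+1) (n+1)⟫
        + ρ/2 * ‖θ (k+1) (n-1) - θ (k+1) n‖^2 + ρ/2 * ‖θ (k+1) n - θ (k+1) (n+1)‖^2
      ≤ f n x + ⟪lam k (n-1), θ (k+1) (n-1) - x⟫ + ⟪lam k n, x - θ (k+1) (n+1)⟫
        + ρ/2 * ‖θ (k+1) (n-1) - x‖^2 + ρ/2 * ‖x - θ (k+1) (n+1)‖^2)
    -- (b) tail update for the last worker n = N
    (hTailN : ∀ k, ∀ x : E,
      f N (θ (k+1) N) + ⟪lam k (N-1), θ (k+1) (N-1) - θ (k+1) N⟫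
        + ρ/2 * ‖θ (k+1) (N-1) - θ (k+1) N‖^2
      ≤ f N x + ⟪lam k (N-1), θ (k+1) (N-1) - x⟫ + ρ/2 * ‖θ (k+1) (N-1) - x‖^2)
    -- (c) dual updates
    (hDual : ∀ k n, 1 ≤ n → n ≤ N - 1 →
      lam (k+1) n = lam k n + ρ • (θ (k+1) n - θ (k+1) (n+1)))
    (θstar : E) (lamstar : ℕ → E)
    (hsaddle : ∀ (th la : ℕ → E),
      L0 N f (fun _ => θstar) la ≤ L0 N f (fun _ => θstar) lamstar ∧
      L0 N f (fun _ => θstar) lamstar ≤ L0 N f th lamstar) :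
    ∀ k : ℕ,
      (1/ρ) * ∑ n ∈ Icc 1 (N-1), ‖lam (k+1) n - lamstar n‖^2
        + ρ * ∑ n ∈ (Icc 1 N).filter (fun n => Odd n ∧ 1 < n), ‖θ (k+1) (n-1) - θstar‖^2
        + ρ * ∑ n ∈ (Icc 1 N).filter (fun n => Odd n), ‖θ (k+1) (n+1) - θstar‖^2
      ≤ (1/ρ) * ∑ n ∈ Icc 1 (N-1), ‖lam k n - lamstar n‖^2
        + ρ * ∑ n ∈ (Icc 1 N).filter (fun n => Odd n ∧ 1 < n), ‖θ k (n-1) - θstar‖^2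
        + ρ * ∑ n ∈ (Icc 1 N).filter (fun n => Odd n), ‖θ k (n+1) - θstar‖^2 :=
  gadmm_lyapunov_monotone_general N hNeven f hconv ρ hρ θ lam hHead hHead1 hTail hTailN hDual θstar
    lamstar hsaddle
end
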